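/- arXiv:2410.07557 — 7 statements merged into one kernel-verified Lean document; each statement's English description precedes it below -/
import Mathlib

section
/- Let d ≥ 2, let B ⊆ ℝ^d be a strictly convex unit ball, and let w ∈ ℝ^d be a nonzero vector. Then the shadow boundary S_w = φ_w^{-1}(0) ⊆ ∂B, i.e., the set of points x ∈ ∂B at which w is tangent to B, is homeomorphic to the sphere 𝕊^{d−2} (with its subspace topology from ∂B). -/
open scoped Pointwise Classical

/-- `B ⊆ ℝ^d` is a unit ball: compact, convex, symmetric about the origin, containing a
neighborhood of 0. -/
def IsUnitBall {d : ℕ} (B : Set (EuclideanSpace ℝ (Fin d))) : Prop :=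
  IsCompact B ∧ Convex ℝ B ∧ B = -B ∧ B ∈ nhds (0 : EuclideanSpace ℝ (Fin d))

/-- A unit ball is strictly convex if its boundary contains no segment of positive length. -/
def IsStrictlyConvex {d : ℕ} (B : Set (EuclideanSpace ℝ (Fin d))) : Prop :=
  ∀ x y : EuclideanSpace ℝ (Fin d), x ≠ y → ¬ segment ℝ x y ⊆ frontier B

/-- The function φ_w: for `x ∈ ∂B`, `phiW B w x = 0` if `w` is tangent to `B` at `x`
(equivalently, under strict convexity, if there is no nonzero `s` with `x - s•w ∈ ∂B`);
otherwise it is the (unique, by strict convexity) nonzero scalar `s` with `x - s•w ∈ ∂B`. -/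
noncomputable def phiW {d : ℕ} (B : Set (EuclideanSpace ℝ (Fin d)))
    (w : EuclideanSpace ℝ (Fin d)) (x : EuclideanSpace ℝ (Fin d)) : ℝ :=
  if h : ∃ s : ℝ, s ≠ 0 ∧ x - s • w ∈ frontier B then h.choose else 0

section Aux

open Set Module

private lemma open_gt_mem {U : Set ℝ} (hU : IsOpen U) {a : ℝ} (ha : a ∈ U) :
    ∃ t, a < t ∧ t ∈ U := by
  rcases Metric.isOpen_iff.1 hU a ha with ⟨ε, hε, hball⟩
  refine ⟨a + ε / 2, by linarith, hball ?_⟩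
  rw [Metric.mem_ball, Real.dist_eq, abs_of_nonneg (by linarith)]
  linarith

/-- phiW vanishes iff there is no nonzero `s` with `x - s•w ∈ ∂B`. -/
private lemma phiW_eq_zero_iff {d : ℕ} (B : Set (EuclideanSpace ℝ (Fin d)))
    (w x : EuclideanSpace ℝ (Fin d)) :
    phiW B w x = 0 ↔ ∀ s : ℝ, s ≠ 0 → x - s • w ∉ frontier B := by
  unfold phiW
  split_ifs with h
  · constructor
    · intro h0; exact absurd h0 h.choose_spec.1
    · intro hall; exact absurd h.choose_spec.2 (hall _ h.choose_spec.1)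
  · push_neg at h
    exact ⟨fun _ => h, fun _ => rfl⟩

/-- In a compact set, translates of a point along a nonzero direction reach the frontier. -/
private lemma exists_sup_frontier {d : ℕ} {B : Set (EuclideanSpace ℝ (Fin d))}
    (hBcpt : IsCompact B) {x₀ w : EuclideanSpace ℝ (Fin d)} (hx₀ : x₀ ∈ B) (hw : w ≠ 0) :
    ∃ b : ℝ, x₀ - b • w ∈ frontier B ∧ ∀ c : ℝ, x₀ - c • w ∈ B → c ≤ b := by
  have hBcl : IsClosed B := hBcpt.isClosed
  have hg : Continuous (fun c : ℝ => x₀ - c • w) :=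
    continuous_const.sub (continuous_id.smul continuous_const)
  set T : Set ℝ := (fun c : ℝ => x₀ - c • w) ⁻¹' B with hTdef
  have hTcl : IsClosed T := hBcl.preimage hg
  obtain ⟨R, hR⟩ := isBounded_iff_forall_norm_le.1 hBcpt.isBounded
  have hwpos : (0 : ℝ) < ‖w‖ := norm_pos_iff.2 hw
  have hTbdd : BddAbove T := by
    refine ⟨(‖x₀‖ + R) / ‖w‖, fun c hc => ?_⟩
    have h1 : ‖c • w‖ ≤ ‖x₀‖ + R := by
      have h2 := hR _ hc
      calc ‖c • w‖ = ‖x₀ - (x₀ - c • w)‖ := by rw [sub_sub_cancel]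
        _ ≤ ‖x₀‖ + ‖x₀ - c • w‖ := norm_sub_le _ _
        _ ≤ ‖x₀‖ + R := by linarith
    rw [norm_smul, Real.norm_eq_abs] at h1
    have h3 : |c| ≤ (‖x₀‖ + R) / ‖w‖ := (le_div_iff₀ hwpos).2 h1
    exact (le_abs_self c).trans h3
  have h0T : (0 : ℝ) ∈ T := by simpa [hTdef] using hx₀
  have hbT : sSup T ∈ T := hTcl.csSup_mem ⟨0, h0T⟩ hTbdd
  refine ⟨sSup T, ?_, fun c hc => le_csSup hTbdd hc⟩
  rw [hBcl.frontier_eq]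
  refine ⟨hbT, fun hint => ?_⟩
  obtain ⟨t, ht, htU⟩ := open_gt_mem (isOpen_interior.preimage hg)
    (show sSup T ∈ _ from hint)
  have htT : t ∈ T := Set.mem_preimage.2 (interior_subset (Set.mem_preimage.1 htU))
  exact absurd (le_csSup hTbdd htT) (not_le.2 ht)

/-- A surjective continuous linear projection with kernel `ℝ ∙ w`. -/
private lemma exists_proj {d : ℕ} {w : EuclideanSpace ℝ (Fin d)} (hw : w ≠ 0) :
    ∃ π : EuclideanSpace ℝ (Fin d) →L[ℝ] EuclideanSpace ℝ (Fin (d - 1)),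
      π w = 0 ∧ (∀ x, π x = 0 → ∃ s : ℝ, x = s • w) ∧ Function.Surjective π := by
  set K : Submodule ℝ (EuclideanSpace ℝ (Fin d)) := (ℝ ∙ w)ᗮ with hKdef
  have hKperp : Kᗮ = ℝ ∙ w := Submodule.orthogonal_orthogonal _
  have hrank : finrank ℝ K = finrank ℝ (EuclideanSpace ℝ (Fin (d - 1))) := by
    have h1 : finrank ℝ (ℝ ∙ w) = 1 := finrank_span_singleton hw
    have h2 := Submodule.finrank_add_finrank_orthogonal
      (K := (ℝ ∙ w : Submodule ℝ (EuclideanSpace ℝ (Fin d))))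
    rw [finrank_euclideanSpace_fin] at h2
    rw [finrank_euclideanSpace_fin, ← hKdef] at *
    omega
  let e : K ≃L[ℝ] EuclideanSpace ℝ (Fin (d - 1)) :=
    (LinearEquiv.ofFinrankEq _ _ hrank).toContinuousLinearEquiv
  refine ⟨(e : K →L[ℝ] EuclideanSpace ℝ (Fin (d - 1))).comp (K.orthogonalProjectionOnto), ?_, ?_, ?_⟩
  · have hwK : K.orthogonalProjectionOnto w = 0 := by
      rw [Submodule.orthogonalProjectionOnto_eq_zero_iff, hKperp]
      exact Submodule.mem_span_singleton_self w
    simp [hwK]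
  · intro x hx
    have h1 : K.orthogonalProjectionOnto x = 0 := by
      have h2 : e (K.orthogonalProjectionOnto x) = 0 := hx
      simpa using (map_eq_zero_iff _ e.injective).1 h2
    have h2 : x ∈ Kᗮ := Submodule.orthogonalProjectionOnto_eq_zero_iff.1 h1
    rw [hKperp, Submodule.mem_span_singleton] at h2
    obtain ⟨s, hs⟩ := h2
    exact ⟨s, hs.symm⟩
  · intro u
    refine ⟨(e.symm u : K), ?_⟩
    simp [Submodule.orthogonalProjectionOnto_mem_subspace_eq_self]

end Aux

/-- Let d ≥ 2, let B ⊆ ℝ^d be a strictly convex unit ball, and let w ∈ ℝ^d be a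
nonzero vector. Then the shadow boundary S_w = φ_w^{-1}(0) ⊆ ∂B is homeomorphic to the sphere
𝕊^{d−2} (with its subspace topology from ∂B). -/
theorem stmt3 (d : ℕ) (hd : 2 ≤ d) (B : Set (EuclideanSpace ℝ (Fin d)))
    (hB : IsUnitBall B) (hBsc : IsStrictlyConvex B)
    (w : EuclideanSpace ℝ (Fin d)) (hw : w ≠ 0) :
    Nonempty (({x ∈ frontier B | phiW B w x = 0} : Set (EuclideanSpace ℝ (Fin d))) ≃ₜ
      (Metric.sphere (0 : EuclideanSpace ℝ (Fin (d - 1))) 1 :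
        Set (EuclideanSpace ℝ (Fin (d - 1))))) := by
  classical
  obtain ⟨hBcpt, hBconv, hBsymm, hBnhds⟩ := hB
  have hBcl : IsClosed B := hBcpt.isClosed
  have h0B : (0 : EuclideanSpace ℝ (Fin d)) ∈ interior B := mem_interior_iff_mem_nhds.2 hBnhds
  have hfrB_subset : frontier B ⊆ B := hBcl.frontier_subset
  obtain ⟨π, hπw, hker, hπsurj⟩ := exists_proj hw
  have hπopen : IsOpenMap π := π.isOpenMap hπsurj
  set C : Set (EuclideanSpace ℝ (Fin (d - 1))) := π '' B with hCdef
  have hCconv : Convex ℝ C := by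
    have := hBconv.linear_image
      (π : EuclideanSpace ℝ (Fin d) →ₗ[ℝ] EuclideanSpace ℝ (Fin (d - 1)))
    simpa [hCdef] using this
  have hCcpt : IsCompact C := hBcpt.image π.continuous
  have hCcl : IsClosed C := hCcpt.isClosed
  have hintC : ∀ x ∈ interior B, π x ∈ interior C := fun x hx =>
    interior_maximal (Set.image_mono interior_subset) (hπopen _ isOpen_interior) ⟨x, hx, rfl⟩
  have h0C : (0 : EuclideanSpace ℝ (Fin (d - 1))) ∈ interior C := by
    have := hintC 0 h0B
    simpa using this
  -- interior points of C are images of interior points of B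
  have lemA : ∀ u ∈ interior C, ∃ y ∈ interior B, π y = u := by
    intro u hu
    have hcont : Continuous (fun t : ℝ => t • u) := continuous_id.smul continuous_const
    obtain ⟨t, ht1, htC⟩ := open_gt_mem (isOpen_interior.preimage hcont)
      (show (1 : ℝ) ∈ _ by rw [Set.mem_preimage, one_smul]; exact hu)
    obtain ⟨z, hzB, hz⟩ := (interior_subset (htC : _ ∈ interior C) : t • u ∈ C)
    have ht0 : (0 : ℝ) < t := by linarith
    have hb0 : (0 : ℝ) < t⁻¹ := by positivity
    have hba : (0 : ℝ) < 1 - t⁻¹ := by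
      have : t⁻¹ < 1 := by
        rw [inv_lt_one_iff₀]; right; exact ht1
      linarith
    refine ⟨t⁻¹ • z, ?_, ?_⟩
    · have := hBconv.combo_interior_closure_mem_interior h0B
        (by rw [hBcl.closure_eq]; exact hzB) hba hb0.le (by ring)
      simpa using this
    · rw [map_smul, hz, smul_smul, inv_mul_cancel₀ ht0.ne', one_smul]
  -- tangency from boundary projection
  have key1 : ∀ x ∈ frontier B, π x ∉ interior C →
      ∀ s : ℝ, s ≠ 0 → x - s • w ∉ frontier B := by
    intro x hx hxint s hs hy
    have hxy : x ≠ x - s • w := by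
      intro h
      have h2 : s • w = 0 := by
        have := sub_eq_self.1 h.symm
        exact this
      rcases smul_eq_zero.1 h2 with h' | h'
      · exact hs h'
      · exact hw h'
    refine hBsc x (x - s • w) hxy ?_
    rintro z ⟨a, b, ha, hb, hab, rfl⟩
    have hzB : a • x + b • (x - s • w) ∈ B :=
      hBconv (hfrB_subset hx) (hfrB_subset hy) ha hb hab
    have hπz : π (a • x + b • (x - s • w)) = π x := by
      simp only [map_add, map_smul, map_sub, hπw, smul_zero, sub_zero, ← add_smul, hab, one_smul]
    have hnotint : a • x + b • (x - s • w) ∉ interior B := by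
      intro hint
      exact hxint (hπz ▸ hintC _ hint)
    rw [hBcl.frontier_eq]
    exact ⟨hzB, hnotint⟩
  -- boundary projection from tangency
  have key2 : ∀ x ∈ frontier B, (∀ s : ℝ, s ≠ 0 → x - s • w ∉ frontier B) →
      π x ∉ interior C := by
    intro x hx htan hint
    obtain ⟨y, hyint, hyπ⟩ := lemA _ hint
    obtain ⟨s, hsxy⟩ := hker (x - y) (by rw [map_sub, hyπ, sub_self])
    have hxB : x ∈ B := hfrB_subset hx
    have hs0 : s ≠ 0 := by
      rintro rfl
      rw [zero_smul, sub_eq_zero] at hsxy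
      exact Set.disjoint_left.1 disjoint_interior_frontier (hsxy ▸ hyint) hx
    have hyB : x - s • w ∈ B := by
      rw [← hsxy, sub_sub_cancel]
      exact interior_subset hyint
    rcases lt_or_gt_of_ne hs0 with hneg | hpos
    · obtain ⟨b', hb'fr, hb'le⟩ := exists_sup_frontier hBcpt hxB (neg_ne_zero.2 hw)
      have h1 : x - (-s) • (-w) ∈ B := by simpa [neg_smul, smul_neg] using hyB
      have h2 : -s ≤ b' := hb'le _ h1
      have hb'pos : (0 : ℝ) < b' := lt_of_lt_of_le (by linarith) h2
      have h3 : x - (-b') • w ∈ frontier B := by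
        simpa [smul_neg, neg_smul, sub_neg_eq_add] using hb'fr
      exact htan (-b') (neg_ne_zero.2 hb'pos.ne') h3
    · obtain ⟨b, hbfr, hble⟩ := exists_sup_frontier hBcpt hxB hw
      have h2 : s ≤ b := hble _ hyB
      have hbpos : (0 : ℝ) < b := lt_of_lt_of_le hpos h2
      exact htan b hbpos.ne' hbfr
  -- the shadow boundary is the preimage of the frontier of C
  have hSeq : {x ∈ frontier B | phiW B w x = 0} = frontier B ∩ π ⁻¹' (frontier C) := by
    ext x
    simp only [Set.mem_setOf_eq, Set.mem_inter_iff, Set.mem_preimage]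
    constructor
    · rintro ⟨hx, h0⟩
      refine ⟨hx, ?_⟩
      rw [hCcl.frontier_eq]
      exact ⟨⟨x, hfrB_subset hx, rfl⟩, key2 x hx ((phiW_eq_zero_iff B w x).1 h0)⟩
    · rintro ⟨hx, hfr⟩
      have hnint : π x ∉ interior C := fun hint =>
        Set.disjoint_left.1 disjoint_interior_frontier hint hfr
      exact ⟨hx, (phiW_eq_zero_iff B w x).2 (key1 x hx hnint)⟩
  -- compactness of the shadow boundary
  have hScl : IsClosed {x ∈ frontier B | phiW B w x = 0} := by
    rw [hSeq]
    exact isClosed_frontier.inter (isClosed_frontier.preimage π.continuous)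
  have hScpt : IsCompact {x ∈ frontier B | phiW B w x = 0} :=
    hBcpt.of_isClosed_subset hScl (fun x hx => hfrB_subset hx.1)
  haveI : CompactSpace {x ∈ frontier B | phiW B w x = 0} := isCompact_iff_compactSpace.1 hScpt
  -- the homeomorphism with frontier C
  have hmem : ∀ x ∈ {x ∈ frontier B | phiW B w x = 0}, π x ∈ frontier C := by
    intro x hx
    rw [hSeq] at hx
    exact hx.2
  let f : {x ∈ frontier B | phiW B w x = 0} → (frontier C : Set _) :=
    fun x => ⟨π x.1, hmem x.1 x.2⟩
  have hfbij : Function.Bijective f := by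
    constructor
    · rintro ⟨x, hxS⟩ ⟨y, hyS⟩ h
      have hπeq : π x = π y := congrArg Subtype.val h
      obtain ⟨s, hs⟩ := hker (x - y) (by rw [map_sub, hπeq, sub_self])
      refine Subtype.ext ?_
      by_cases h0 : s = 0
      · rw [h0, zero_smul] at hs
        exact sub_eq_zero.1 hs
      · exfalso
        have hmemfr : x - s • w ∈ frontier B := by
          rw [← hs, sub_sub_cancel]
          exact hyS.1
        exact (phiW_eq_zero_iff B w x).1 hxS.2 s h0 hmemfr
    · rintro ⟨u, hu⟩
      obtain ⟨x₀, hx₀B, hx₀π⟩ : u ∈ C := hCcl.frontier_subset hu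
      obtain ⟨b, hbfr, -⟩ := exists_sup_frontier hBcpt hx₀B hw
      have hπx : π (x₀ - b • w) = u := by
        rw [map_sub, map_smul, hπw, smul_zero, sub_zero, hx₀π]
      have hnint : π (x₀ - b • w) ∉ interior C := fun hint => by
        rw [hπx] at hint
        exact Set.disjoint_left.1 disjoint_interior_frontier hint hu
      refine ⟨⟨x₀ - b • w, hbfr, (phiW_eq_zero_iff B w _).2 (key1 _ hbfr hnint)⟩, ?_⟩
      exact Subtype.ext hπx
  have hfcont : Continuous f :=
    Continuous.subtype_mk (π.continuous.comp continuous_subtype_val) _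
  have hfcont' : Continuous ⇑(Equiv.ofBijective f hfbij) := hfcont
  let e₁ := hfcont'.homeoOfEquivCompactToT2
  obtain ⟨h, -, -, hfr⟩ := exists_homeomorph_image_interior_closure_frontier_eq_unitBall
    hCconv ⟨0, h0C⟩ hCcpt.isBounded
  exact ⟨e₁.trans ((h.image (frontier C)).trans (Homeomorph.setCongr hfr))⟩
end

section
/- Let d ≥ 2, let B ⊆ ℝ^d be a strictly convex unit ball, and let w ∈ ℝ^d be a nonzero vector. Then the map φ_w : ∂B → ℝ is continuous (with respect to the subspace topology on ∂B). -/
open scoped Pointwise Classical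
open Filter Topology

-- Lemma L: open segment between two distinct points of B lies in the interior.
lemma lemL {d : ℕ} {B : Set (EuclideanSpace ℝ (Fin d))} (hB : IsUnitBall B)
    (hBsc : IsStrictlyConvex B) {p q : EuclideanSpace ℝ (Fin d)} (hp : p ∈ B) (hq : q ∈ B)
    (hpq : p ≠ q) : openSegment ℝ p q ⊆ interior B := by
  obtain ⟨hcmp, hconv, -, hnhds⟩ := hB
  have hclosed : IsClosed B := hcmp.isClosed
  have h0 : (0 : EuclideanSpace ℝ (Fin d)) ∈ interior B := mem_interior_iff_mem_nhds.2 hnhds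
  intro z hz
  by_contra hzi
  have hzB : z ∈ B := hconv.segment_subset hp hq (openSegment_subset_segment ℝ p q hz)
  obtain ⟨f, hf⟩ := geometric_hahn_banach_open_point (hconv.interior) isOpen_interior hzi
  -- all of B is mapped ≤ f z
  have hle : ∀ u ∈ B, f u ≤ f z := by
    intro u hu
    have hev : ∀ l : ℝ, l ∈ Set.Ioo (0:ℝ) 1 → l * f u < f z := by
      intro l hl
      have hmem : l • u + (1 - l) • (0 : EuclideanSpace ℝ (Fin d)) ∈ interior B :=
        hconv.combo_self_interior_mem_interior hu h0 hl.1.le (by linarith [hl.2]) (by ring)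
      have := hf _ hmem
      simpa using this
    have htend : Tendsto (fun l : ℝ => l * f u) (𝓝[<] (1:ℝ)) (𝓝 (f u)) := by
      have : Tendsto (fun l : ℝ => l * f u) (𝓝 (1:ℝ)) (𝓝 (1 * f u)) :=
        (continuous_mul_right (f u)).tendsto 1
      simpa using this.mono_left nhdsWithin_le_nhds
    refine le_of_tendsto htend ?_
    filter_upwards [Ioo_mem_nhdsLT_of_mem (Set.mem_Ioc.2 ⟨zero_lt_one, le_refl (1:ℝ)⟩)] with l hl
    exact (hev l hl).le
  have hfz_pos : 0 < f z := by
    have := hf 0 h0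
    simpa using this
  obtain ⟨a, b, ha, hb, hab, hzeq⟩ := hz
  have hfp : f p = f z ∧ f q = f z := by
    have h1 : f p ≤ f z := hle p hp
    have h2 : f q ≤ f z := hle q hq
    have h3 : a * f p + b * f q = f z := by
      rw [← hzeq]; simp [map_add, map_smul]
    constructor <;> nlinarith
  -- every point of the segment is in the frontier
  have hseg : segment ℝ p q ⊆ frontier B := by
    rintro u hu
    have huB : u ∈ B := hconv.segment_subset hp hq hu
    obtain ⟨a', b', ha', hb', hab', hueq⟩ := hu
    have hfu : f u = f z := by
      rw [← hueq]; simp [map_add, map_smul, hfp.1, hfp.2]; nlinarith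
    have hui : u ∉ interior B := by
      intro hui
      obtain ⟨ε, hε, hball⟩ := Metric.isOpen_iff.1 isOpen_interior u hui
      set δ : ℝ := ε / (2 * (‖z‖ + 1)) with hδdef
      have hz1 : 0 < ‖z‖ + 1 := by positivity
      have hδpos : 0 < δ := by positivity
      have hmem : u + δ • z ∈ B := by
        apply interior_subset; apply hball
        rw [Metric.mem_ball, dist_eq_norm]
        have : ‖u + δ • z - u‖ = δ * ‖z‖ := by
          rw [add_sub_cancel_left, norm_smul, Real.norm_eq_abs, abs_of_pos hδpos]
        rw [this, hδdef]
        rw [div_mul_eq_mul_div, div_lt_iff₀ (by positivity)]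
        nlinarith [norm_nonneg z]
      have := hle _ hmem
      rw [map_add, map_smul] at this
      simp only [smul_eq_mul] at this
      nlinarith
    rw [hclosed.frontier_eq]
    exact ⟨huB, hui⟩
  exact hBsc p q hpq hseg

-- three collinear frontier points are impossible
lemma lemThree {d : ℕ} {B : Set (EuclideanSpace ℝ (Fin d))} (hB : IsUnitBall B)
    (hBsc : IsStrictlyConvex B) {w x : EuclideanSpace ℝ (Fin d)} (hw : w ≠ 0)
    {a b c : ℝ} (hab : a < b) (hbc : b < c)
    (ha : x - a • w ∈ frontier B) (hb : x - b • w ∈ frontier B)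
    (hc : x - c • w ∈ frontier B) : False := by
  have hclosed : IsClosed B := hB.1.isClosed
  have hfa : x - a • w ∈ B := hclosed.frontier_subset ha
  have hfc : x - c • w ∈ B := hclosed.frontier_subset hc
  have hne : x - a • w ≠ x - c • w := by
    intro h
    have h1 : a • w = c • w := sub_right_injective h
    rcases smul_eq_zero.1 (by rw [sub_smul, h1, sub_self] : (a - c) • w = 0) with h2 | h2
    · exact absurd (sub_eq_zero.1 h2) (by linarith)
    · exact hw h2
  set θ : ℝ := (c - b) / (c - a) with hθdef
  have hca : 0 < c - a := by linarith
  have hθ1 : 0 < θ := by apply div_pos <;> linarith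
  have hθ2 : θ < 1 := by rw [div_lt_one hca]; linarith
  have hmem : x - b • w ∈ openSegment ℝ (x - a • w) (x - c • w) := by
    refine ⟨θ, 1 - θ, hθ1, by linarith, by ring, ?_⟩
    have hb' : b = θ * a + (1 - θ) * c := by
      rw [hθdef]
      field_simp
      ring
    rw [hb']
    module
  have hint : x - b • w ∈ interior B := lemL hB hBsc hfa hfc hne hmem
  rw [hclosed.frontier_eq] at hb
  exact hb.2 hint

-- uniqueness of the nonzero frontier parameter
lemma lemU {d : ℕ} {B : Set (EuclideanSpace ℝ (Fin d))} (hB : IsUnitBall B)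
    (hBsc : IsStrictlyConvex B) {w x : EuclideanSpace ℝ (Fin d)} (hw : w ≠ 0)
    {s t : ℝ} (hs0 : s ≠ 0) (ht0 : t ≠ 0) (hx : x ∈ frontier B)
    (hs : x - s • w ∈ frontier B) (ht : x - t • w ∈ frontier B) : s = t := by
  by_contra hst
  have h0 : x - (0:ℝ) • w ∈ frontier B := by simpa using hx
  rcases lt_trichotomy s 0 with hs' | hs' | hs'
  · rcases lt_trichotomy t 0 with ht' | ht' | ht'
    · rcases lt_or_gt_of_ne hst with h | h
      · exact lemThree hB hBsc hw h ht' hs ht h0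
      · exact lemThree hB hBsc hw h hs' ht hs h0
    · exact ht0 ht'
    · exact lemThree hB hBsc hw hs' ht' hs h0 ht
  · exact hs0 hs'
  · rcases lt_trichotomy t 0 with ht' | ht' | ht'
    · exact lemThree hB hBsc hw ht' hs' ht h0 hs
    · exact ht0 ht'
    · rcases lt_or_gt_of_ne hst with h | h
      · exact lemThree hB hBsc hw hs' h h0 hs ht
      · exact lemThree hB hBsc hw ht' h h0 ht hs

lemma phi_frontier {d : ℕ} {B : Set (EuclideanSpace ℝ (Fin d))}
    {w x : EuclideanSpace ℝ (Fin d)} (hx : x ∈ frontier B) :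
    x - (phiW B w x) • w ∈ frontier B := by
  unfold phiW
  split_ifs with h
  · exact h.choose_spec.2
  · simpa using hx

lemma phi_eq {d : ℕ} {B : Set (EuclideanSpace ℝ (Fin d))} (hB : IsUnitBall B)
    (hBsc : IsStrictlyConvex B) {w x : EuclideanSpace ℝ (Fin d)} (hw : w ≠ 0)
    (hx : x ∈ frontier B) {s : ℝ} (hs0 : s ≠ 0) (hs : x - s • w ∈ frontier B) :
    phiW B w x = s := by
  have h : ∃ s : ℝ, s ≠ 0 ∧ x - s • w ∈ frontier B := ⟨s, hs0, hs⟩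
  unfold phiW
  rw [dif_pos h]
  exact lemU hB hBsc hw h.choose_spec.1 hs0 hx h.choose_spec.2 hs

lemma phi_ne_zero_frontier {d : ℕ} {B : Set (EuclideanSpace ℝ (Fin d))}
    {w x : EuclideanSpace ℝ (Fin d)} (h : phiW B w x ≠ 0) :
    x - (phiW B w x) • w ∈ frontier B := by
  unfold phiW at *
  split_ifs at * with hh
  · exact hh.choose_spec.2
  · exact absurd rfl h

-- bound on parameters
lemma lemBound {d : ℕ} {B : Set (EuclideanSpace ℝ (Fin d))} (hB : IsUnitBall B)
    {w : EuclideanSpace ℝ (Fin d)} (hw : w ≠ 0) :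
    ∃ M : ℝ, 0 ≤ M ∧ ∀ (x : EuclideanSpace ℝ (Fin d)) (s : ℝ), x ∈ B → x - s • w ∈ B →
      |s| ≤ M := by
  obtain ⟨R, hR⟩ := hB.1.isBounded.subset_closedBall 0
  have h0B : (0 : EuclideanSpace ℝ (Fin d)) ∈ B := mem_of_mem_nhds hB.2.2.2
  have hR0 : 0 ≤ R := by simpa using hR h0B
  have hwpos : 0 < ‖w‖ := norm_pos_iff.2 hw
  refine ⟨2 * R / ‖w‖, by positivity, fun x s hx hxs => ?_⟩
  have h1 : ‖x‖ ≤ R := by simpa using hR hx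
  have h2 : ‖x - s • w‖ ≤ R := by simpa using hR hxs
  have h3 : ‖s • w‖ ≤ 2 * R := by
    have : s • w = x - (x - s • w) := by abel
    rw [this]
    calc ‖x - (x - s • w)‖ ≤ ‖x‖ + ‖x - s • w‖ := norm_sub_le _ _
    _ ≤ 2 * R := by linarith
  rw [norm_smul, Real.norm_eq_abs] at h3
  rw [le_div_iff₀ hwpos]
  exact h3

lemma phi_abs_le {d : ℕ} {B : Set (EuclideanSpace ℝ (Fin d))} (hB : IsUnitBall B)
    {w : EuclideanSpace ℝ (Fin d)} (hw : w ≠ 0) {M : ℝ}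
    (hM : ∀ (x : EuclideanSpace ℝ (Fin d)) (s : ℝ), x ∈ B → x - s • w ∈ B → |s| ≤ M)
    {x : EuclideanSpace ℝ (Fin d)} (hx : x ∈ frontier B) : |phiW B w x| ≤ M := by
  have hclosed : IsClosed B := hB.1.isClosed
  exact hM x _ (hclosed.frontier_subset hx)
    (hclosed.frontier_subset (phi_frontier (w := w) hx))

-- if there is an interior point at positive parameter r, then phiW ≥ r
lemma lemA {d : ℕ} {B : Set (EuclideanSpace ℝ (Fin d))} (hB : IsUnitBall B)
    (hBsc : IsStrictlyConvex B) {w x : EuclideanSpace ℝ (Fin d)} (hw : w ≠ 0)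
    (hx : x ∈ frontier B) {r : ℝ} (hr : 0 < r) (hmem : x - r • w ∈ interior B) :
    r ≤ phiW B w x := by
  obtain ⟨M, hM0, hMb⟩ := lemBound hB hw
  have hclosed : IsClosed B := hB.1.isClosed
  have hxB : x ∈ B := hclosed.frontier_subset hx
  set T : Set ℝ := {u : ℝ | x - u • w ∈ B} with hTdef
  have hcont : Continuous fun u : ℝ => x - u • w :=
    continuous_const.sub (continuous_id.smul continuous_const)
  have hT0 : (0:ℝ) ∈ T := by simpa [hTdef] using hxB
  have hTr : r ∈ T := show x - r • w ∈ B from interior_subset hmem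
  have hbdd : BddAbove T := ⟨M, fun u hu => (abs_le.1 (hMb x u hxB hu)).2⟩
  have hclosedT : IsClosed T := hclosed.preimage hcont
  set b := sSup T with hbdef
  have hbT : b ∈ T := hclosedT.csSup_mem ⟨0, hT0⟩ hbdd
  have hbr : r ≤ b := le_csSup hbdd hTr
  have hbni : x - b • w ∉ interior B := by
    intro hbi
    have hO : IsOpen {u : ℝ | x - u • w ∈ interior B} := isOpen_interior.preimage hcont
    obtain ⟨ε, hε, hball⟩ := Metric.isOpen_iff.1 hO b hbi
    have hmem2 : b + ε / 2 ∈ T := by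
      have h' : b + ε / 2 ∈ Metric.ball b ε := by
        rw [Metric.mem_ball, Real.dist_eq]
        rw [show b + ε / 2 - b = ε / 2 by ring, abs_of_pos (by linarith)]
        linarith
      exact show x - (b + ε / 2) • w ∈ B from interior_subset (hball h')
    have := le_csSup hbdd hmem2
    linarith
  have hbf : x - b • w ∈ frontier B := by
    rw [hclosed.frontier_eq]; exact ⟨hbT, hbni⟩
  have hbpos : (0:ℝ) < b := lt_of_lt_of_le hr hbr
  have := phi_eq hB hBsc hw hx hbpos.ne' hbf
  · rw [this]; exact hbr

-- mirror: interior point at negative parameter r gives phiW ≤ r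
lemma lemA' {d : ℕ} {B : Set (EuclideanSpace ℝ (Fin d))} (hB : IsUnitBall B)
    (hBsc : IsStrictlyConvex B) {w x : EuclideanSpace ℝ (Fin d)} (hw : w ≠ 0)
    (hx : x ∈ frontier B) {r : ℝ} (hr : r < 0) (hmem : x - r • w ∈ interior B) :
    phiW B w x ≤ r := by
  obtain ⟨M, hM0, hMb⟩ := lemBound hB hw
  have hclosed : IsClosed B := hB.1.isClosed
  have hxB : x ∈ B := hclosed.frontier_subset hx
  set T : Set ℝ := {u : ℝ | x - u • w ∈ B} with hTdef
  have hcont : Continuous fun u : ℝ => x - u • w :=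
    continuous_const.sub (continuous_id.smul continuous_const)
  have hT0 : (0:ℝ) ∈ T := by simpa [hTdef] using hxB
  have hTr : r ∈ T := show x - r • w ∈ B from interior_subset hmem
  have hbdd : BddBelow T := ⟨-M, fun u hu => neg_le_of_abs_le (hMb x u hxB hu)⟩
  have hclosedT : IsClosed T := hclosed.preimage hcont
  set b := sInf T with hbdef
  have hbT : b ∈ T := hclosedT.csInf_mem ⟨0, hT0⟩ hbdd
  have hbr : b ≤ r := csInf_le hbdd hTr
  have hbni : x - b • w ∉ interior B := by
    intro hbi
    have hO : IsOpen {u : ℝ | x - u • w ∈ interior B} := isOpen_interior.preimage hcont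
    obtain ⟨ε, hε, hball⟩ := Metric.isOpen_iff.1 hO b hbi
    have hmem2 : b - ε / 2 ∈ T := by
      have h' : b - ε / 2 ∈ Metric.ball b ε := by
        rw [Metric.mem_ball, Real.dist_eq]
        rw [show b - ε / 2 - b = -(ε / 2) by ring, abs_neg, abs_of_pos (by linarith)]
        linarith
      exact show x - (b - ε / 2) • w ∈ B from interior_subset (hball h')
    have := csInf_le hbdd hmem2
    linarith
  have hbf : x - b • w ∈ frontier B := by
    rw [hclosed.frontier_eq]; exact ⟨hbT, hbni⟩
  have hbneg : b < 0 := lt_of_le_of_lt hbr hr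
  have := phi_eq hB hBsc hw hx hbneg.ne hbf
  rw [this]; exact hbr

-- limits of phiW along sequences on the frontier
lemma lemLim {d : ℕ} {B : Set (EuclideanSpace ℝ (Fin d))} (hB : IsUnitBall B)
    (hBsc : IsStrictlyConvex B) {w : EuclideanSpace ℝ (Fin d)} (hw : w ≠ 0)
    {x : EuclideanSpace ℝ (Fin d)} (hx : x ∈ frontier B)
    {v : ℕ → EuclideanSpace ℝ (Fin d)} (hv : ∀ n, v n ∈ frontier B)
    (hvx : Tendsto v atTop (𝓝 x)) {c : ℝ}
    (hc : Tendsto (fun n => phiW B w (v n)) atTop (𝓝 c)) : c = phiW B w x := by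
  have hclosed : IsClosed B := hB.1.isClosed
  have hcf : x - c • w ∈ frontier B := by
    have ht : Tendsto (fun n => v n - (phiW B w (v n)) • w) atTop (𝓝 (x - c • w)) :=
      hvx.sub (hc.smul_const w)
    exact isClosed_frontier.mem_of_tendsto ht
      (Filter.Eventually.of_forall fun n => phi_frontier (hv n))
  by_cases hc0 : c = 0
  · subst hc0
    by_contra hne0
    have hne : phiW B w x ≠ 0 := fun h => hne0 h.symm
    set t := phiW B w x with htdef
    have htf : x - t • w ∈ frontier B := phi_ne_zero_frontier hne
    have hxB : x ∈ B := hclosed.frontier_subset hx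
    have htB : x - t • w ∈ B := hclosed.frontier_subset htf
    have hxne : x ≠ x - t • w := by
      intro h
      have h1 : t • w = 0 := by
        have h2 : x - (x - t • w) = 0 := sub_eq_zero.2 h
        rwa [sub_sub_cancel] at h2
      rcases smul_eq_zero.1 h1 with h2 | h2
      · exact hne h2
      · exact hw h2
    have hmid : x - (t / 2) • w ∈ interior B := by
      apply lemL hB hBsc hxB htB hxne
      refine ⟨1/2, 1/2, by norm_num, by norm_num, by norm_num, ?_⟩
      module
    have hevmid : ∀ᶠ n in atTop, v n - (t / 2) • w ∈ interior B := by
      have ht2 : Tendsto (fun n => v n - (t / 2) • w) atTop (𝓝 (x - (t / 2) • w)) :=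
        hvx.sub_const _
      exact ht2.eventually_mem (isOpen_interior.mem_nhds hmid)
    rcases lt_trichotomy t 0 with ht' | ht' | ht'
    · have hlt : ∀ᶠ n in atTop, t / 2 < phiW B w (v n) :=
        hc.eventually_mem (Ioi_mem_nhds (by linarith : t / 2 < 0))
      rcases (hevmid.and hlt).exists with ⟨n, h1, h2⟩
      have := lemA' hB hBsc hw (hv n) (by linarith : t / 2 < 0) h1
      linarith
    · exact hne ht'
    · have hlt : ∀ᶠ n in atTop, phiW B w (v n) < t / 2 :=
        hc.eventually_mem (Iio_mem_nhds (by linarith : (0:ℝ) < t / 2))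
      rcases (hevmid.and hlt).exists with ⟨n, h1, h2⟩
      have := lemA hB hBsc hw (hv n) (by linarith : 0 < t / 2) h1
      linarith
  · exact (phi_eq hB hBsc hw hx hc0 hcf).symm


/-- Let d ≥ 2, let B ⊆ ℝ^d be a strictly convex unit ball, and let w ∈ ℝ^d be a
nonzero vector. Then the map φ_w : ∂B → ℝ is continuous (with respect to the subspace topology
on ∂B). -/
theorem stmt4 (d : ℕ) (hd : 2 ≤ d) (B : Set (EuclideanSpace ℝ (Fin d)))
    (hB : IsUnitBall B) (hBsc : IsStrictlyConvex B)
    (w : EuclideanSpace ℝ (Fin d)) (hw : w ≠ 0) :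
    ContinuousOn (phiW B w) (frontier B) := by
  intro x hx
  obtain ⟨M, hM0, hMb⟩ := lemBound hB hw
  have key : ∀ v : ℕ → EuclideanSpace ℝ (Fin d), (∀ n, v n ∈ frontier B) →
      Tendsto v atTop (𝓝 x) →
      Tendsto (fun n => phiW B w (v n)) atTop (𝓝 (phiW B w x)) := by
    intro v hv hvx
    apply tendsto_of_subseq_tendsto
    intro ns hns
    have hbound : ∀ n : ℕ, phiW B w (v (ns n)) ∈ Set.Icc (-M) M := fun n =>
      abs_le.1 (phi_abs_le hB hw hMb (hv (ns n)))
    obtain ⟨a, -, ms, hmsmono, hlim⟩ :=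
      tendsto_subseq_of_bounded (Metric.isBounded_Icc (-M) M) hbound
    have hcomp : Tendsto (fun n => v (ns (ms n))) atTop (𝓝 x) :=
      hvx.comp (hns.comp hmsmono.tendsto_atTop)
    have ha : a = phiW B w x :=
      lemLim hB hBsc hw hx (fun n => hv (ns (ms n))) hcomp hlim
    exact ⟨ms, ha ▸ hlim⟩
  rw [ContinuousWithinAt, tendsto_iff_seq_tendsto]
  intro u hu
  rw [tendsto_nhdsWithin_iff] at hu
  set v : ℕ → EuclideanSpace ℝ (Fin d) := fun n => if u n ∈ frontier B then u n else x with hvdef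
  have hv : ∀ n, v n ∈ frontier B := fun n => by
    by_cases h : u n ∈ frontier B <;> simp [hvdef, h, hx]
  have hveq : ∀ᶠ n in atTop, u n = v n := hu.2.mono fun n h => by simp [hvdef, h]
  have hvx : Tendsto v atTop (𝓝 x) := hu.1.congr' hveq
  have := key v hv hvx
  exact this.congr' (hveq.mono fun n h => by simp [Function.comp, h])
end

section
/- Let d ≥ 2, let B ⊆ ℝ^d be a strictly convex unit ball, and let w ∈ ℝ^d be nonzero. Then the sets U^+ = φ_w^{-1}((0,∞)) and U^- = φ_w^{-1}((−∞,0)) are open subsets of ∂B in the subspace topology. -/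
open scoped Pointwise Classical

section aux

variable {d : ℕ} {B : Set (EuclideanSpace ℝ (Fin d))}
  {x w : EuclideanSpace ℝ (Fin d)}

/-- membership of a line point in an open segment of line points -/
lemma line_mem_openSegment (x w : EuclideanSpace ℝ (Fin d)) {a b t : ℝ}
    (h1 : a < t) (h2 : t < b) :
    x - t • w ∈ openSegment ℝ (x - a • w) (x - b • w) := by
  have hab : 0 < b - a := by linarith
  refine ⟨1 - (t - a) / (b - a), (t - a) / (b - a), ?_, ?_, by ring, ?_⟩
  · have : (t - a) / (b - a) < 1 := by
      rw [div_lt_one hab]; linarith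
    linarith
  · exact div_pos (by linarith) hab
  · have key : (1 - (t - a) / (b - a)) * a + ((t - a) / (b - a)) * b = t := by
      have h3 : (t - a) / (b - a) * (b - a) = t - a := div_mul_cancel₀ _ (ne_of_gt hab)
      linear_combination h3
    have expand : (1 - (t - a) / (b - a)) • (x - a • w) + ((t - a) / (b - a)) • (x - b • w)
        = x - ((1 - (t - a) / (b - a)) * a + ((t - a) / (b - a)) * b) • w := by
      module
    rw [expand, key]

lemma line_inj (hw : w ≠ 0) {s t : ℝ} (h : x - s • w = x - t • w) : s = t := by
  have := sub_right_injective h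
  exact smul_left_injective ℝ hw this

/-- Chord lemma: no interior point of a chord of `B` lies on the frontier. -/
lemma chord (hB : IsUnitBall B) (hBsc : IsStrictlyConvex B) (hw : w ≠ 0)
    {s1 s2 t : ℝ} (h1 : x - s1 • w ∈ B) (h2 : x - s2 • w ∈ B)
    (hlt1 : s1 < t) (hlt2 : t < s2) (hfr : x - t • w ∈ frontier B) : False := by
  obtain ⟨hBc, hconv, -, -⟩ := hB
  have hcl : IsClosed B := hBc.isClosed
  have hne : x - s1 • w ≠ x - s2 • w := fun h => by
    have := line_inj hw h; linarith
  refine hBsc _ _ hne ?_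
  rintro u hu
  obtain ⟨θ1, θ2, h01, h02, hsum, rfl⟩ := hu
  set s : ℝ := θ1 * s1 + θ2 * s2 with hs
  have hu' : θ1 • (x - s1 • w) + θ2 • (x - s2 • w) = x - s • w := by
    have : θ1 • (x - s1 • w) + θ2 • (x - s2 • w)
        = (θ1 + θ2) • x - (θ1 * s1 + θ2 * s2) • w := by module
    rw [this, hsum, one_smul]
  rw [hu']
  have he1 : s - s1 = θ2 * (s2 - s1) := by linear_combination hs + s1 * hsum
  have he2 : s2 - s = θ1 * (s2 - s1) := by linear_combination -hs - s2 * hsum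
  have h12 : 0 ≤ s2 - s1 := by linarith
  have hs1 : s1 ≤ s := by nlinarith [mul_nonneg h02 h12]
  have hs2 : s ≤ s2 := by nlinarith [mul_nonneg h01 h12]
  have huB : x - s • w ∈ B := by
    rw [← hu']; exact hconv h1 h2 h01 h02 hsum
  rw [frontier, hcl.closure_eq]
  refine ⟨huB, fun hui => ?_⟩
  have hts : t ≠ s := fun h => by
    rw [← h] at hui
    exact hfr.2 hui
  rcases lt_or_gt_of_ne hts with h | h
  · -- s1 ≤ ... t < s : t ∈ (s1, s)
    have : x - t • w ∈ openSegment ℝ (x - s1 • w) (x - s • w) :=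
      line_mem_openSegment x w hlt1 h
    have := hconv.openSegment_closure_interior_subset_interior
      (subset_closure h1) hui this
    exact hfr.2 this
  · have : x - t • w ∈ openSegment ℝ (x - s • w) (x - s2 • w) :=
      line_mem_openSegment x w h hlt2
    have := hconv.openSegment_interior_closure_subset_interior
      hui (subset_closure h2) this
    exact hfr.2 this

/-- Uniqueness of the nonzero frontier parameter. -/
lemma uniq (hB : IsUnitBall B) (hBsc : IsStrictlyConvex B) (hw : w ≠ 0)
    (hx : x ∈ frontier B) {s1 s2 : ℝ} (hs1 : s1 ≠ 0) (hs2 : s2 ≠ 0)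
    (hf1 : x - s1 • w ∈ frontier B) (hf2 : x - s2 • w ∈ frontier B) : s1 = s2 := by
  have hcl : IsClosed B := hB.1.isClosed
  have hxB : x ∈ B := by
    have := hx.1; rwa [hcl.closure_eq] at this
  have hx0 : x - (0 : ℝ) • w ∈ frontier B := by simpa using hx
  have hx0B : x - (0 : ℝ) • w ∈ B := by simpa using hxB
  have h1B : x - s1 • w ∈ B := by
    have := hf1.1; rwa [hcl.closure_eq] at this
  have h2B : x - s2 • w ∈ B := by
    have := hf2.1; rwa [hcl.closure_eq] at this
  by_contra hne
  rcases lt_trichotomy s1 0 with h10 | h10 | h10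
  · rcases lt_trichotomy s2 0 with h20 | h20 | h20
    · rcases lt_or_gt_of_ne hne with h | h
      · exact chord hB hBsc hw h1B hx0B h h20 hf2
      · exact chord hB hBsc hw h2B hx0B h h10 hf1
    · exact hs2 h20
    · exact chord hB hBsc hw h1B h2B h10 h20 hx0
  · exact hs1 h10
  · rcases lt_trichotomy s2 0 with h20 | h20 | h20
    · exact chord hB hBsc hw h2B h1B h20 h10 hx0
    · exact hs2 h20
    · rcases lt_or_gt_of_ne hne with h | h
      · exact chord hB hBsc hw hx0B h2B h10 h hf1
      · exact chord hB hBsc hw hx0B h1B h20 h hf2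

lemma pos_iff (hB : IsUnitBall B) (hBsc : IsStrictlyConvex B) (hw : w ≠ 0)
    (hx : x ∈ frontier B) :
    0 < phiW B w x ↔ ∃ ε > (0 : ℝ), x - ε • w ∈ interior B := by
  have hcl : IsClosed B := hB.1.isClosed
  have hconv := hB.2.1
  have hxB : x ∈ B := by have := hx.1; rwa [hcl.closure_eq] at this
  constructor
  · intro hpos
    rw [phiW] at hpos
    split_ifs at hpos with h
    · set s0 := h.choose with hs0def
      obtain ⟨hs0ne, hs0fr⟩ := h.choose_spec
      have hs0B : x - s0 • w ∈ B := by
        have := hs0fr.1; rwa [hcl.closure_eq] at this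
      refine ⟨s0 / 2, by positivity, ?_⟩
      by_contra hni
      have hmemB : x - (s0 / 2) • w ∈ B := by
        have hseg := hconv.segment_subset hxB hs0B
        have hmem0 : x - (s0 / 2) • w ∈ openSegment ℝ (x - (0 : ℝ) • w) (x - s0 • w) :=
          line_mem_openSegment x w (by positivity) (by linarith)
        rw [zero_smul, sub_zero] at hmem0
        exact hseg (openSegment_subset_segment ℝ _ _ hmem0)
      have hfr2 : x - (s0 / 2) • w ∈ frontier B := by
        rw [frontier, hcl.closure_eq]; exact ⟨hmemB, hni⟩
      have hx0B : x - (0 : ℝ) • w ∈ B := by simpa using hxB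
      exact chord hB hBsc hw hx0B hs0B (by positivity) (by linarith) hfr2
    · exact absurd hpos (lt_irrefl 0)
  · rintro ⟨ε, hε, hint⟩
    -- find the greatest s ≥ ε with x - s • w ∈ B
    have hcont : Continuous fun s : ℝ => x - s • w :=
      continuous_const.sub (continuous_id.smul continuous_const)
    obtain ⟨R, hR⟩ := hB.1.isBounded.exists_norm_le
    set S : Set ℝ := {s : ℝ | ε ≤ s ∧ x - s • w ∈ B} with hS
    have hSclosed : IsClosed S :=
      (isClosed_Ici.preimage continuous_id).inter (hcl.preimage hcont)
    have hSsub : S ⊆ Set.Icc ε ((R + ‖x‖) / ‖w‖) := by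
      rintro s ⟨hs1, hs2⟩
      refine ⟨hs1, ?_⟩
      have h1 : ‖s • w‖ ≤ R + ‖x‖ := by
        have : s • w = x - (x - s • w) := by abel
        rw [this]
        calc ‖x - (x - s • w)‖ ≤ ‖x‖ + ‖x - s • w‖ := norm_sub_le _ _
        _ ≤ ‖x‖ + R := by linarith [hR _ hs2]
        _ = R + ‖x‖ := by ring
      have hwpos : (0 : ℝ) < ‖w‖ := norm_pos_iff.mpr hw
      rw [norm_smul, Real.norm_eq_abs] at h1
      rw [le_div_iff₀ hwpos]
      calc s * ‖w‖ ≤ |s| * ‖w‖ := mul_le_mul_of_nonneg_right (le_abs_self s) hwpos.le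
        _ ≤ R + ‖x‖ := h1
    have hScompact : IsCompact S :=
      isCompact_Icc.of_isClosed_subset hSclosed hSsub
    have hSne : S.Nonempty := ⟨ε, le_refl _, interior_subset hint⟩
    obtain ⟨s, hsS, hsub⟩ := hScompact.exists_isGreatest hSne
    have hsε : ε ≤ s := hsS.1
    have hsfr : x - s • w ∈ frontier B := by
      rw [frontier, hcl.closure_eq]
      refine ⟨hsS.2, fun hsi => ?_⟩
      obtain ⟨δ, hδ, hball⟩ := Metric.isOpen_iff.mp
        (isOpen_interior.preimage hcont) s hsi
      have hmem : s + δ / 2 ∈ S := by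
        refine ⟨by linarith, ?_⟩
        have : s + δ / 2 ∈ Metric.ball s δ := by
          simp [Real.dist_eq, abs_of_nonneg]
          rw [abs_of_nonneg (by positivity)]
          linarith
        exact interior_subset (hball this)
      have := hsub hmem
      linarith
    have hspos : 0 < s := lt_of_lt_of_le hε hsε
    have h : ∃ u : ℝ, u ≠ 0 ∧ x - u • w ∈ frontier B :=
      ⟨s, ne_of_gt hspos, hsfr⟩
    rw [phiW, dif_pos h]
    obtain ⟨hcne, hcfr⟩ := h.choose_spec
    have := uniq hB hBsc hw hx hcne (ne_of_gt hspos) hcfr hsfr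
    rw [this]
    exact hspos

lemma phiW_neg_eq (hB : IsUnitBall B) (hBsc : IsStrictlyConvex B) (hw : w ≠ 0)
    (hx : x ∈ frontier B) : phiW B (-w) x = - phiW B w x := by
  have key : ∀ s : ℝ, x - s • (-w) = x - (-s) • w := by intro s; module
  by_cases h : ∃ s : ℝ, s ≠ 0 ∧ x - s • w ∈ frontier B
  · have h' : ∃ s : ℝ, s ≠ 0 ∧ x - s • (-w) ∈ frontier B := by
      obtain ⟨s, hs, hfr⟩ := h
      exact ⟨-s, neg_ne_zero.mpr hs, by rw [key]; simpa using hfr⟩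
    rw [phiW, phiW, dif_pos h, dif_pos h']
    obtain ⟨hne, hfr⟩ := h.choose_spec
    obtain ⟨hne', hfr'⟩ := h'.choose_spec
    rw [key] at hfr'
    have := uniq hB hBsc hw hx (neg_ne_zero.mpr hne') hne hfr' hfr
    linarith
  · have h' : ¬ ∃ s : ℝ, s ≠ 0 ∧ x - s • (-w) ∈ frontier B := by
      rintro ⟨s, hs, hfr⟩
      rw [key] at hfr
      exact h ⟨-s, neg_ne_zero.mpr hs, hfr⟩
    rw [phiW, phiW, dif_neg h, dif_neg h', neg_zero]

lemma open_pos (hB : IsUnitBall B) (hBsc : IsStrictlyConvex B) (hw : w ≠ 0) :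
    IsOpen {x : (frontier B : Set (EuclideanSpace ℝ (Fin d))) | 0 < phiW B w ↑x} := by
  have : {x : (frontier B : Set (EuclideanSpace ℝ (Fin d))) | 0 < phiW B w ↑x}
      = Subtype.val ⁻¹' (⋃ ε ∈ Set.Ioi (0 : ℝ), {y | y - ε • w ∈ interior B}) := by
    ext x
    simp only [Set.mem_setOf_eq, Set.mem_preimage, Set.mem_iUnion, Set.mem_Ioi]
    rw [pos_iff hB hBsc hw x.2]
    constructor
    · rintro ⟨ε, hε, h⟩; exact ⟨ε, hε, h⟩
    · rintro ⟨ε, hε, h⟩; exact ⟨ε, hε, h⟩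
  rw [this]
  refine (isOpen_biUnion fun ε _ => ?_).preimage continuous_subtype_val
  exact isOpen_interior.preimage (continuous_id.sub continuous_const)

end aux

/-- Let d ≥ 2, let B ⊆ ℝ^d be a strictly convex unit ball, and let w ∈ ℝ^d be
nonzero. Then the sets U^+ = φ_w^{-1}((0,∞)) and U^- = φ_w^{-1}((−∞,0)) are open subsets of
∂B in the subspace topology. -/
theorem stmt6 (d : ℕ) (hd : 2 ≤ d) (B : Set (EuclideanSpace ℝ (Fin d)))
    (hB : IsUnitBall B) (hBsc : IsStrictlyConvex B)
    (w : EuclideanSpace ℝ (Fin d)) (hw : w ≠ 0) :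
    IsOpen {x : (frontier B : Set (EuclideanSpace ℝ (Fin d))) | 0 < phiW B w ↑x} ∧
    IsOpen {x : (frontier B : Set (EuclideanSpace ℝ (Fin d))) | phiW B w ↑x < 0} := by
  refine ⟨open_pos hB hBsc hw, ?_⟩
  have hneg : {x : (frontier B : Set (EuclideanSpace ℝ (Fin d))) | phiW B w ↑x < 0}
      = {x : (frontier B : Set (EuclideanSpace ℝ (Fin d))) | 0 < phiW B (-w) ↑x} := by
    ext x
    simp only [Set.mem_setOf_eq, phiW_neg_eq hB hBsc hw x.2]
    constructor <;> intro h <;> linarith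
  rw [hneg]
  exact open_pos hB hBsc (neg_ne_zero.mpr hw)
end

section
/- For integers k ≥ c ≥ 2, any vector x ∈ ℝ^d, and any finite set X ⊆ ℝ^d, we have |X + [0, k−c−1]·x| ≥ (1 − c/k)·|X + [0, k−1]·x|. -/
open scoped Pointwise Classical

section Aux

variable {V : Type*} [AddCommGroup V] [DecidableEq V]

/-- translation by x -/
private def TT (x : V) (S : Finset V) : Finset V := S.image (· + x)

private lemma mem_TT {x : V} {S : Finset V} {y : V} :
    y ∈ TT x S ↔ ∃ z ∈ S, z + x = y := by
  simp only [TT, Finset.mem_image]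

private lemma card_TT (x : V) (S : Finset V) : (TT x S).card = S.card :=
  Finset.card_image_of_injective _ (add_left_injective x)

private lemma TT_union (x : V) (S T : Finset V) :
    TT x (S ∪ T) = TT x S ∪ TT x T := Finset.image_union _ _

private lemma add_TT (x : V) (X S : Finset V) : X + TT x S = TT x (X + S) := by
  ext y
  simp only [mem_TT, Finset.mem_add]
  constructor
  · rintro ⟨a, ha, b, hb, rfl⟩
    obtain ⟨z, hz, rfl⟩ := hb
    exact ⟨a + z, ⟨a, ha, z, hz, rfl⟩, add_assoc _ _ _⟩
  · rintro ⟨z, ⟨a, ha, b, hb, rfl⟩, rfl⟩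
    exact ⟨a, ha, b + x, ⟨b, hb, rfl⟩, (add_assoc _ _ _).symm⟩

/-- the key concavity step -/
private lemma key_step (x : V) (B : Finset V) :
    ((B ∪ TT x B) ∪ TT x (B ∪ TT x B)).card + B.card ≤ 2 * (B ∪ TT x B).card := by
  set C := B ∪ TT x B with hC
  have e1 : C.card = B.card + (TT x B \ B).card := by
    rw [hC, Finset.union_comm, ← Finset.card_sdiff_add_card_eq_card Finset.subset_union_right,
      add_comm, Finset.union_sdiff_right]
  have e2 : (C ∪ TT x C).card ≤ C.card + (TT x C \ C).card := by
    rw [Finset.union_comm, ← Finset.card_sdiff_add_card_eq_card Finset.subset_union_right,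
      add_comm, Finset.union_sdiff_right]
  have sub : TT x C \ C ⊆ TT x (TT x B \ B) := by
    intro y hy
    rw [Finset.mem_sdiff] at hy
    obtain ⟨hy1, hy2⟩ := hy
    rw [hC, TT_union, Finset.mem_union] at hy1
    rcases hy1 with hy1 | hy1
    · exact absurd (Finset.mem_union_right _ hy1) (by rwa [hC] at hy2)
    · obtain ⟨z, hz, rfl⟩ := mem_TT.mp hy1
      refine mem_TT.mpr ⟨z, Finset.mem_sdiff.mpr ⟨hz, fun hzB => ?_⟩, rfl⟩
      exact hy2 (Finset.mem_union_right _ (mem_TT.mpr ⟨z, hzB, rfl⟩))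
  have e3 : (TT x C \ C).card ≤ (TT x B \ B).card := by
    calc (TT x C \ C).card ≤ (TT x (TT x B \ B)).card := Finset.card_le_card sub
      _ = (TT x B \ B).card := card_TT _ _
  omega

end Aux

private lemma ratio_lemma (h : ℕ → ℕ) (_h0 : h 0 = 0)
    (hconc : ∀ m, h (m + 2) + h m ≤ 2 * h (m + 1)) :
    ∀ m n, m ≤ n → m * h n ≤ n * h m := by
  have key : ∀ n, n * h (n + 1) ≤ (n + 1) * h n := by
    intro n
    induction n with
    | zero => simp
    | succ n ih =>
      have A := hconc n
      nlinarith [A, ih]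
  intro m n hmn
  induction n with
  | zero =>
    have hm0 : m = 0 := Nat.le_zero.mp hmn
    simp [hm0]
  | succ n ih =>
    rcases eq_or_lt_of_le hmn with rfl | hlt
    · omega
    · have hmn' : m ≤ n := Nat.lt_succ_iff.mp hlt
      have h1 := ih hmn'
      have h2 := key n
      rcases Nat.eq_zero_or_pos n with rfl | hn
      · have hm0 : m = 0 := by omega
        simp [hm0]
      · have hm : n * (m * h (n + 1)) ≤ n * ((n + 1) * h m) := by nlinarith
        exact Nat.le_of_mul_le_mul_left hm hn

/-- For integers k ≥ c ≥ 2, any vector x ∈ ℝ^d, and any finite set X ⊆ ℝ^d, we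
have |X + [0, k−c−1]·x| ≥ (1 − c/k)·|X + [0, k−1]·x|.
Here `[0, j−1]·x` is realized as the image of `Finset.range j` under `i ↦ i • x`. -/
theorem stmt8 (d : ℕ) (k c : ℕ) (hc : 2 ≤ c) (hck : c ≤ k)
    (x : EuclideanSpace ℝ (Fin d)) (X : Finset (EuclideanSpace ℝ (Fin d))) :
    (1 - (c : ℝ) / (k : ℝ)) *
        ((X + (Finset.range k).image (fun j : ℕ => (j : ℝ) • x)).card : ℝ) ≤
      ((X + (Finset.range (k - c)).image (fun j : ℕ => (j : ℝ) • x)).card : ℝ) := by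
  classical
  set R : ℕ → Finset (EuclideanSpace ℝ (Fin d)) :=
    fun m => (Finset.range m).image (fun j : ℕ => (j : ℝ) • x) with hR
  set f : ℕ → ℕ := fun m => (X + R m).card with hf
  have Rstep : ∀ m, 1 ≤ m → R (m + 1) = R m ∪ TT x (R m) := by
    intro m hm
    ext v
    simp only [hR, mem_TT, Finset.mem_union, Finset.mem_image, Finset.mem_range]
    constructor
    · rintro ⟨j, hj, rfl⟩
      by_cases hjm : j < m
      · exact Or.inl ⟨j, hjm, rfl⟩
      · have hjm' : j = m := by omega
        subst hjm'
        refine Or.inr ⟨((j - 1 : ℕ) : ℝ) • x, ⟨j - 1, by omega, rfl⟩, ?_⟩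
        have hc1 : ((j - 1 : ℕ) : ℝ) = (j : ℝ) - 1 := by
          push_cast [Nat.cast_sub hm]; ring
        rw [hc1, sub_smul, one_smul, sub_add_cancel]
    · rintro (⟨j, hj, rfl⟩ | ⟨z, ⟨j, hj, rfl⟩, rfl⟩)
      · exact ⟨j, by omega, rfl⟩
      · refine ⟨j + 1, by omega, ?_⟩
        push_cast
        rw [add_smul, one_smul]
  have Astep : ∀ m, 1 ≤ m → X + R (m + 1) = (X + R m) ∪ TT x (X + R m) := by
    intro m hm
    rw [Rstep m hm, Finset.add_union, add_TT]
  have hf0 : f 0 = 0 := by simp [hf, hR]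
  have hconc : ∀ m, f (m + 2) + f m ≤ 2 * f (m + 1) := by
    intro m
    rcases Nat.eq_zero_or_pos m with rfl | hm
    · show f 2 + f 0 ≤ 2 * f 1
      have h1 : f 1 = X.card := by
        have hR1 : R 1 = {0} := by
          simp [hR]
        simp [hf, hR1]
      have h2 : f 2 ≤ 2 * X.card := by
        calc f 2 ≤ X.card * (R 2).card := Finset.card_add_le
          _ ≤ X.card * 2 := by
              have : (R 2).card ≤ 2 := le_trans Finset.card_image_le (by simp)
              exact Nat.mul_le_mul_left _ this
          _ = 2 * X.card := mul_comm _ _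
      omega
    · have e1 := Astep m hm
      have e2 := Astep (m + 1) (by omega)
      have : f (m + 2) + f m ≤ 2 * f (m + 1) := by
        rw [hf]
        simp only []
        rw [e2, e1]
        exact key_step x (X + R m)
      exact this
  have main := ratio_lemma f hf0 hconc (k - c) k (Nat.sub_le _ _)
  have hk : (0 : ℝ) < k := by
    have : 0 < k := by omega
    exact_mod_cast this
  have main' : ((k : ℝ) - c) * (f k : ℝ) ≤ (k : ℝ) * (f (k - c) : ℝ) := by
    have := main
    have hcast : ((k - c : ℕ) : ℝ) = (k : ℝ) - c := by
      push_cast [Nat.cast_sub hck]; ring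
    calc ((k : ℝ) - c) * (f k : ℝ) = ((k - c : ℕ) : ℝ) * (f k : ℝ) := by rw [hcast]
      _ ≤ (k : ℝ) * (f (k - c) : ℝ) := by exact_mod_cast main
  have goal' : (1 - (c : ℝ) / k) * (f k : ℝ) ≤ (f (k - c) : ℝ) := by
    have heq : (1 - (c : ℝ) / k) * (f k : ℝ) = (((k : ℝ) - c) * (f k : ℝ)) / k := by
      field_simp
    rw [heq, div_le_iff₀ hk, mul_comm ((f (k - c) : ℕ) : ℝ)]
    exact main'
  simpa [hf, hR] using goal'
end

section
/- Let X ⊆ ℝ^d be a finite set and x ∈ ℝ^d. For i ≥ 1 define Δ_i = |X + [0, i]·x| − |X + [0, i−1]·x|, and set Δ_0 = |X|. Then for every i ≥ 1 we have Δ_i = |X \ (X + [−i, −1]·x)|, and consequently the sequence Δ_0 ≥ Δ_1 ≥ Δ_2 ≥ ⋯ is nonincreasing. -/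
open scoped Pointwise Classical

/-- Let X ⊆ ℝ^d be a finite set and x ∈ ℝ^d. For i ≥ 1 define
Δ_i = |X + [0, i]·x| − |X + [0, i−1]·x|, and set Δ_0 = |X|. Then for every i ≥ 1 we have
Δ_i = |X \ (X + [−i, −1]·x)|, and consequently the sequence Δ_0 ≥ Δ_1 ≥ Δ_2 ≥ ⋯ is
nonincreasing. Here `[0, i]·x` is the image of `Finset.range (i+1)` under `j ↦ j • x`, and
`[−i, −1]·x` is the image of `Finset.Icc 1 i` under `j ↦ (−j) • x`. -/
theorem stmt9 (d : ℕ) (X : Finset (EuclideanSpace ℝ (Fin d))) (x : EuclideanSpace ℝ (Fin d))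
    (Δ : ℕ → ℤ) (hΔ0 : Δ 0 = X.card)
    (hΔ : ∀ i : ℕ, 1 ≤ i →
      Δ i = ((X + (Finset.range (i + 1)).image (fun j : ℕ => (j : ℝ) • x)).card : ℤ) -
            ((X + (Finset.range i).image (fun j : ℕ => (j : ℝ) • x)).card : ℤ)) :
    (∀ i : ℕ, 1 ≤ i →
        Δ i = ((X \ (X + (Finset.Icc 1 i).image (fun j : ℕ => (-(j : ℝ)) • x))).card : ℤ)) ∧
    (∀ i : ℕ, Δ (i + 1) ≤ Δ i) := by
  have key : ∀ i : ℕ,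
      (X + (Finset.range (i + 1)).image (fun j : ℕ => (j : ℝ) • x)).card
        = (X + (Finset.range i).image (fun j : ℕ => (j : ℝ) • x)).card
          + (X \ (X + (Finset.Icc 1 i).image (fun j : ℕ => (-(j : ℝ)) • x))).card := by
    intro i
    set A := X + (Finset.range i).image (fun j : ℕ => (j : ℝ) • x) with hA
    set D := X + (Finset.Icc 1 i).image (fun j : ℕ => (-(j : ℝ)) • x) with hD
    set C := X.image (fun a => a + (i : ℝ) • x) with hC
    have hB : X + (Finset.range (i + 1)).image (fun j : ℕ => (j : ℝ) • x) = C ∪ A := by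
      ext y
      simp only [hA, hC, Finset.mem_add, Finset.mem_image, Finset.mem_range,
        Finset.mem_union, Nat.lt_succ_iff_lt_or_eq]
      constructor
      · rintro ⟨a, ha, _, ⟨j, hj | rfl, rfl⟩, rfl⟩
        · exact Or.inr ⟨a, ha, _, ⟨j, hj, rfl⟩, rfl⟩
        · exact Or.inl ⟨a, ha, rfl⟩
      · rintro (⟨a, ha, rfl⟩ | ⟨a, ha, _, ⟨j, hj, rfl⟩, rfl⟩)
        · exact ⟨a, ha, _, ⟨i, Or.inr rfl, rfl⟩, rfl⟩
        · exact ⟨a, ha, _, ⟨j, Or.inl hj, rfl⟩, rfl⟩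
    have hCA : C \ A = (X \ D).image (fun a => a + (i : ℝ) • x) := by
      ext y
      simp only [hA, hC, hD, Finset.mem_sdiff, Finset.mem_image, Finset.mem_add,
        Finset.mem_range, Finset.mem_Icc]
      constructor
      · rintro ⟨⟨a, ha, rfl⟩, h⟩
        refine ⟨a, ⟨ha, fun hmem => h ?_⟩, rfl⟩
        obtain ⟨b, hb, _, ⟨j, hj, rfl⟩, rfl⟩ := hmem
        refine ⟨b, hb, _, ⟨i - j, by omega, rfl⟩, ?_⟩
        have hc : ((i - j : ℕ) : ℝ) = (i : ℝ) - (j : ℝ) := by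
          push_cast [Nat.cast_sub hj.2]; ring
        rw [hc]
        module
      · rintro ⟨a, ⟨ha, hna⟩, rfl⟩
        refine ⟨⟨a, ha, rfl⟩, fun hmem => hna ?_⟩
        obtain ⟨b, hb, _, ⟨j, hj, rfl⟩, heq⟩ := hmem
        refine ⟨b, hb, _, ⟨i - j, ⟨by omega, by omega⟩, rfl⟩, ?_⟩
        have hax : a = b + ((j : ℝ) - (i : ℝ)) • x := by
          have h1 : a + (i:ℝ) • x = b + (j:ℝ) • x := heq.symm
          have h2 := congrArg (fun z => z - (i:ℝ) • x) h1
          simpa [sub_smul, add_sub_assoc] using h2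
        have hc : ((i - j : ℕ) : ℝ) = (i : ℝ) - (j : ℝ) := by
          push_cast [Nat.cast_sub (le_of_lt hj)]; ring
        rw [hc, hax]
        module
    have hinj : Function.Injective (fun a : EuclideanSpace ℝ (Fin d) => a + (i : ℝ) • x) :=
      fun a b h => by simpa using h
    have h1 : (C \ A).card + A.card = (C ∪ A).card := Finset.card_sdiff_add_card C A
    rw [hB, ← h1, hCA, Finset.card_image_of_injective _ hinj]
    omega
  have part1 : ∀ i : ℕ, 1 ≤ i →
      Δ i = ((X \ (X + (Finset.Icc 1 i).image (fun j : ℕ => (-(j : ℝ)) • x))).card : ℤ) := by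
    intro i hi
    rw [hΔ i hi, key i]
    push_cast
    ring
  refine ⟨part1, ?_⟩
  intro i
  match i with
  | 0 =>
      rw [part1 1 le_rfl, hΔ0]
      exact_mod_cast Finset.card_le_card (Finset.sdiff_subset)
  | (n + 1) =>
      rw [part1 (n + 1) (by omega), part1 (n + 2) (by omega)]
      have hsub : X \ (X + (Finset.Icc 1 (n + 2)).image (fun j : ℕ => (-(j : ℝ)) • x))
          ⊆ X \ (X + (Finset.Icc 1 (n + 1)).image (fun j : ℕ => (-(j : ℝ)) • x)) := by
        apply Finset.sdiff_subset_sdiff le_rfl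
        exact Finset.add_subset_add_left
          (Finset.image_subset_image (Finset.Icc_subset_Icc le_rfl (by omega)))
      exact_mod_cast Finset.card_le_card hsub
end

section
/- Let ‖·‖ be a norm on ℝ^d, let v_1, …, v_m ∈ ℝ^d be vectors, and let k_1, …, k_m ≥ 2 be integers. Suppose U is a set of integer tuples contained in [0,k_1] × ⋯ × [0,k_m] such that the map c ↦ c_1v_1 + ⋯ + c_mv_m is injective on U and its image {c_1v_1 + ⋯ + c_mv_m : c ∈ U} is a non-overlapping set of |U| vectors, each of norm 1. Define S = {a_1v_1 + ⋯ + a_mv_m : a_i ∈ {0, 1, …, k_i − 1} for each i}. Then the number of unit distances spanned by S under ‖·‖ is at least |S| · Σ_{c ∈ U} Π_{i=1}^{m} (1 − c_i/k_i). -/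
open scoped Pointwise Classical

/-- A function `N : ℝ^d → ℝ` is a norm. -/
def IsNorm {d : ℕ} (N : EuclideanSpace ℝ (Fin d) → ℝ) : Prop :=
  (∀ x y, N (x + y) ≤ N x + N y) ∧
  (∀ (a : ℝ) (x : EuclideanSpace ℝ (Fin d)), N (a • x) = |a| * N x) ∧
  (∀ x, N x = 0 ↔ x = 0)

namespace Stmt10Aux

variable {d m : ℕ}

noncomputable def phi (v : Fin m → EuclideanSpace ℝ (Fin d)) (a : Fin m → ℕ) :
    EuclideanSpace ℝ (Fin d) := ∑ i, (a i : ℝ) • v i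

lemma phi_add (v : Fin m → EuclideanSpace ℝ (Fin d)) (a b : Fin m → ℕ) :
    phi v (a + b) = phi v a + phi v b := by
  simp only [phi, Pi.add_apply, ← Finset.sum_add_distrib]
  refine Finset.sum_congr rfl fun i _ => ?_
  push_cast
  rw [add_smul]

lemma phi_single (v : Fin m → EuclideanSpace ℝ (Fin d)) (j : Fin m) :
    phi v (Pi.single j 1) = v j := by
  simp only [phi]
  rw [Finset.sum_eq_single j]
  · simp
  · intro i _ hij; simp [Pi.single_apply, hij]
  · simp

noncomputable def Box (n : Fin m → ℕ) : Finset (Fin m → ℕ) :=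
  Fintype.piFinset fun i => Finset.range (n i)

lemma mem_Box {n : Fin m → ℕ} {a : Fin m → ℕ} : a ∈ Box n ↔ ∀ i, a i < n i := by
  simp [Box, Fintype.mem_piFinset]

noncomputable def img (v : Fin m → EuclideanSpace ℝ (Fin d)) (n : Fin m → ℕ) :
    Finset (EuclideanSpace ℝ (Fin d)) := (Box n).image (phi v)

lemma img_mono (v : Fin m → EuclideanSpace ℝ (Fin d)) {n n' : Fin m → ℕ}
    (h : ∀ i, n i ≤ n' i) : img v n ⊆ img v n' := by
  apply Finset.image_subset_image
  intro a ha
  rw [mem_Box] at ha ⊢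
  exact fun i => lt_of_lt_of_le (ha i) (h i)

/-- The "new layer" when extending the box in direction `j` from height `t` to `t+1`. -/
noncomputable def layer (v : Fin m → EuclideanSpace ℝ (Fin d)) (j : Fin m)
    (n : Fin m → ℕ) (t : ℕ) : Finset (EuclideanSpace ℝ (Fin d)) :=
  img v (Function.update n j (t + 1)) \ img v (Function.update n j t)

lemma layer_card_antitone_succ (v : Fin m → EuclideanSpace ℝ (Fin d)) (j : Fin m)
    (n : Fin m → ℕ) (t : ℕ) :
    (layer v j n (t + 1)).card ≤ (layer v j n t).card := by
  apply Finset.card_le_card_of_injOn (fun x => x - v j)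
  · intro x hx
    rw [layer, Finset.mem_coe, Finset.mem_sdiff] at hx ⊢
    obtain ⟨hx1, hx2⟩ := hx
    obtain ⟨a, ha, rfl⟩ := Finset.mem_image.mp hx1
    rw [mem_Box] at ha
    have haj : a j = t + 1 := by
      rcases Nat.lt_succ_iff_lt_or_eq.mp (by simpa using ha j) with h | h
      · exact absurd (Finset.mem_image.mpr ⟨a, mem_Box.mpr fun i => by
          rcases eq_or_ne i j with rfl | hij
          · simpa using h
          · simpa [Function.update_apply, hij] using ha i, rfl⟩) hx2
      · exact h
    set b := Function.update a j t with hb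
    have hab : a = b + Pi.single j 1 := by
      funext i
      rcases eq_or_ne i j with rfl | hij
      · simp [hb, haj]
      · simp [hb, Function.update_apply, hij, Pi.single_apply]
    have hphib : phi v a - v j = phi v b := by
      rw [hab, phi_add, phi_single]; abel
    constructor
    · beta_reduce
      rw [hphib]
      refine Finset.mem_image.mpr ⟨b, mem_Box.mpr fun i => ?_, rfl⟩
      rcases eq_or_ne i j with rfl | hij
      · simp [hb]
      · simpa [hb, Function.update_apply, hij] using ha i
    · intro hmem
      obtain ⟨b', hb', hphib'⟩ := Finset.mem_image.mp hmem
      rw [mem_Box] at hb'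
      apply hx2
      refine Finset.mem_image.mpr ⟨b' + Pi.single j 1, mem_Box.mpr fun i => ?_, ?_⟩
      · rcases eq_or_ne i j with rfl | hij
        · have := hb' i
          simp only [Function.update_self] at this ⊢
          simp only [Pi.add_apply, Pi.single_eq_same]
          omega
        · have := hb' i
          simpa [Function.update_apply, hij, Pi.single_apply] using this
      · beta_reduce at hphib'
        rw [phi_add, phi_single, hphib']
        abel
  · intro x _ y _ h
    simpa using sub_left_inj.mp h

lemma img_card_update_succ (v : Fin m → EuclideanSpace ℝ (Fin d)) (j : Fin m)
    (n : Fin m → ℕ) (t : ℕ) :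
    (img v (Function.update n j (t + 1))).card
      = (layer v j n t).card + (img v (Function.update n j t)).card := by
  rw [layer, Finset.card_sdiff_add_card_eq_card]
  apply img_mono
  intro i
  rcases eq_or_ne i j with rfl | hij
  · simp
  · simp [Function.update_apply, hij]

lemma img_card_update_zero (v : Fin m → EuclideanSpace ℝ (Fin d)) (j : Fin m)
    (n : Fin m → ℕ) : (img v (Function.update n j 0)).card = 0 := by
  rw [Finset.card_eq_zero, img, Finset.image_eq_empty]
  rw [Finset.eq_empty_iff_forall_notMem]
  intro a ha
  have := mem_Box.mp ha j
  simp at this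

lemma img_card_update_eq_sum (v : Fin m → EuclideanSpace ℝ (Fin d)) (j : Fin m)
    (n : Fin m → ℕ) (s : ℕ) :
    (img v (Function.update n j s)).card = ∑ t ∈ Finset.range s, (layer v j n t).card := by
  induction s with
  | zero => simpa using img_card_update_zero v j n
  | succ s ih => rw [img_card_update_succ, ih, Finset.sum_range_succ, add_comm]

/-- For an antitone sequence, partial averages decrease. -/
lemma antitone_sum_mul {a : ℕ → ℕ} (ha : ∀ t, a (t + 1) ≤ a t) {s n : ℕ} (hs : s ≤ n) :
    s * ∑ t ∈ Finset.range n, a t ≤ n * ∑ t ∈ Finset.range s, a t := by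
  have ha' : Antitone a := antitone_nat_of_succ_le ha
  rcases Nat.eq_zero_or_pos s with rfl | hpos
  · simp
  obtain ⟨r, rfl⟩ : ∃ r, s = r + 1 := ⟨s - 1, by omega⟩
  have hsplit : ∑ t ∈ Finset.range (r+1), a t + ∑ t ∈ Finset.Ico (r+1) n, a t
      = ∑ t ∈ Finset.range n, a t := Finset.sum_range_add_sum_Ico a hs
  have h1 : (r + 1) * a r ≤ ∑ t ∈ Finset.range (r+1), a t := by
    have := Finset.card_nsmul_le_sum (Finset.range (r+1)) a (a r)
      (fun t ht => ha' (by simp at ht; omega))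
    simpa [Finset.card_range, smul_eq_mul] using this
  have h2 : ∑ t ∈ Finset.Ico (r+1) n, a t ≤ (n - (r+1)) * a r := by
    have := Finset.sum_le_card_nsmul (Finset.Ico (r+1) n) a (a r)
      (fun t ht => ha' (by simp [Finset.mem_Ico] at ht; omega))
    simpa [Nat.card_Ico, smul_eq_mul] using this
  calc (r + 1) * ∑ t ∈ Finset.range n, a t
      = (r + 1) * ∑ t ∈ Finset.range (r+1), a t + (r + 1) * ∑ t ∈ Finset.Ico (r+1) n, a t := by
        rw [← hsplit]; ring
    _ ≤ (r + 1) * ∑ t ∈ Finset.range (r+1), a t + (n - (r+1)) * ((r + 1) * a r) := by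
        refine Nat.add_le_add_left ?_ _
        calc (r + 1) * ∑ t ∈ Finset.Ico (r+1) n, a t
            ≤ (r + 1) * ((n - (r+1)) * a r) := Nat.mul_le_mul_left _ h2
          _ = (n - (r+1)) * ((r + 1) * a r) := by ring
    _ ≤ (r + 1) * ∑ t ∈ Finset.range (r+1), a t + (n - (r+1)) * ∑ t ∈ Finset.range (r+1), a t :=
        Nat.add_le_add_left (Nat.mul_le_mul_left _ h1) _
    _ = (r + 1 + (n - (r+1))) * ∑ t ∈ Finset.range (r+1), a t := by ring
    _ = n * ∑ t ∈ Finset.range (r+1), a t := by congr 1; omega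

lemma key_coord (v : Fin m → EuclideanSpace ℝ (Fin d)) (j : Fin m) (n : Fin m → ℕ)
    {s : ℕ} (hs : s ≤ n j) :
    (img v n).card * s ≤ (img v (Function.update n j s)).card * n j := by
  have h0 : img v n = img v (Function.update n j (n j)) := by rw [Function.update_eq_self]
  rw [h0, img_card_update_eq_sum, img_card_update_eq_sum]
  rw [mul_comm, mul_comm _ (n j)]
  exact antitone_sum_mul (layer_card_antitone_succ v j n) hs

lemma key_finset (v : Fin m → EuclideanSpace ℝ (Fin d)) (k c : Fin m → ℕ)
    (T : Finset (Fin m)) :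
    (img v k).card * ∏ i ∈ T, (k i - c i)
      ≤ (img v (fun i => if i ∈ T then k i - c i else k i)).card * ∏ i ∈ T, k i := by
  classical
  induction T using Finset.induction_on with
  | empty => simp
  | @insert j T hj ih =>
    set n : Fin m → ℕ := fun i => if i ∈ T then k i - c i else k i with hn
    have hnj : n j = k j := by simp [hn, hj]
    have hupd : (fun i => if i ∈ insert j T then k i - c i else k i)
        = Function.update n j (k j - c j) := by
      funext i
      rcases eq_or_ne i j with rfl | hij
      · simp
      · simp [Function.update_apply, hij, hn, Finset.mem_insert]
    have hstep := key_coord v j n (s := k j - c j) (by rw [hnj]; omega)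
    rw [hupd, Finset.prod_insert hj, Finset.prod_insert hj]
    calc (img v k).card * ((k j - c j) * ∏ i ∈ T, (k i - c i))
        = ((img v k).card * ∏ i ∈ T, (k i - c i)) * (k j - c j) := by ring
      _ ≤ ((img v n).card * ∏ i ∈ T, k i) * (k j - c j) := Nat.mul_le_mul_right _ ih
      _ = ((img v n).card * (k j - c j)) * ∏ i ∈ T, k i := by ring
      _ ≤ ((img v (Function.update n j (k j - c j))).card * n j) * ∏ i ∈ T, k i :=
          Nat.mul_le_mul_right _ hstep
      _ = (img v (Function.update n j (k j - c j))).card * (k j * ∏ i ∈ T, k i) := by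
          rw [hnj]; ring

lemma key_all (v : Fin m → EuclideanSpace ℝ (Fin d)) (k c : Fin m → ℕ) :
    (img v k).card * ∏ i, (k i - c i) ≤ (img v (fun i => k i - c i)).card * ∏ i, k i := by
  simpa using key_finset v k c Finset.univ

end Stmt10Aux

open Stmt10Aux in
/-- Let ‖·‖ be a norm on ℝ^d, let v_1, …, v_m ∈ ℝ^d, and let
k_1, …, k_m ≥ 2 be integers. Suppose U ⊆ [0,k_1] × ⋯ × [0,k_m] is a set of integer tuples
such that c ↦ c_1v_1 + ⋯ + c_mv_m is injective on U and its image is a non-overlapping set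
of |U| vectors of norm 1. With S = {a_1v_1 + ⋯ + a_mv_m : 0 ≤ a_i ≤ k_i − 1}, the number of
unit distances spanned by S is at least |S| · Σ_{c ∈ U} Π_i (1 − c_i/k_i). (The number of
ordered pairs of distinct points at distance 1 is twice the number of unordered such pairs.) -/
theorem stmt10 (d m : ℕ) (N : EuclideanSpace ℝ (Fin d) → ℝ) (hN : IsNorm N)
    (v : Fin m → EuclideanSpace ℝ (Fin d)) (k : Fin m → ℕ) (hk : ∀ i, 2 ≤ k i)
    (U : Finset (Fin m → ℕ))
    (hUbound : ∀ c ∈ U, ∀ i, c i ≤ k i)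
    (hinj : ∀ c ∈ U, ∀ c' ∈ U,
      (∑ i, (c i : ℝ) • v i) = (∑ i, (c' i : ℝ) • v i) → c = c')
    (hnonoverlap : ∀ c ∈ U, ∀ c' ∈ U,
      (∑ i, (c i : ℝ) • v i) ≠ -(∑ i, (c' i : ℝ) • v i))
    (hunit : ∀ c ∈ U, N (∑ i, (c i : ℝ) • v i) = 1) :
    2 * ((((Fintype.piFinset fun i => Finset.range (k i)).image
            (fun a => ∑ i, (a i : ℝ) • v i)).card : ℝ) *
          ∑ c ∈ U, ∏ i, (1 - (c i : ℝ) / (k i : ℝ))) ≤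
      (((((Fintype.piFinset fun i => Finset.range (k i)).image
            (fun a => ∑ i, (a i : ℝ) • v i)) ×ˢ
          ((Fintype.piFinset fun i => Finset.range (k i)).image
            (fun a => ∑ i, (a i : ℝ) • v i))).filter
          fun p => p.1 ≠ p.2 ∧ N (p.1 - p.2) = 1).card : ℝ) := by
  classical
  have hS : (Fintype.piFinset fun i => Finset.range (k i)).image
      (fun a => ∑ i, (a i : ℝ) • v i) = img v k := rfl
  rw [hS]
  set S := img v k with hSdef
  set F := ((S ×ˢ S).filter fun p => p.1 ≠ p.2 ∧ N (p.1 - p.2) = 1) with hF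
  -- basic norm facts
  have N0 : N 0 = 0 := (hN.2.2 0).mpr rfl
  have Nneg : ∀ x, N (-x) = N x := by
    intro x
    have := hN.2.1 (-1) x
    simpa using this
  have hne0 : ∀ c ∈ U, phi v c ≠ 0 := by
    intro c hc h
    have : N (phi v c) = 1 := hunit c hc
    rw [h, N0] at this
    norm_num at this
  -- the pair classes
  set P : EuclideanSpace ℝ (Fin d) → Finset (EuclideanSpace ℝ (Fin d) × EuclideanSpace ℝ (Fin d))
    := fun w => F.filter (fun p => p.1 - p.2 = w) with hP
  have hPdisj : ∀ w w', w ≠ w' → Disjoint (P w) (P w') := by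
    intro w w' hww
    rw [Finset.disjoint_left]
    intro p hp hp'
    exact hww (((Finset.mem_filter.mp hp).2).symm.trans ((Finset.mem_filter.mp hp').2))
  set W : Finset (EuclideanSpace ℝ (Fin d)) :=
    U.image (phi v) ∪ U.image (fun c => -(phi v c)) with hW
  have hsumW : ∑ w ∈ W, (P w).card ≤ F.card := by
    rw [← Finset.card_biUnion (fun w _ w' _ h => hPdisj w w' h)]
    apply Finset.card_le_card
    intro p hp
    obtain ⟨w, _, hpw⟩ := Finset.mem_biUnion.mp hp
    exact (Finset.mem_filter.mp hpw).1
  have hWdisj : Disjoint (U.image (phi v)) (U.image (fun c => -(phi v c))) := by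
    rw [Finset.disjoint_left]
    intro x hx hx'
    obtain ⟨c, hc, rfl⟩ := Finset.mem_image.mp hx
    obtain ⟨c', hc', heq⟩ := Finset.mem_image.mp hx'
    exact hnonoverlap c hc c' hc' (heq.symm)
  have hsplit : ∑ w ∈ W, (P w).card
      = ∑ c ∈ U, (P (phi v c)).card + ∑ c ∈ U, (P (-(phi v c))).card := by
    have h1 : ∀ c ∈ U, ∀ c' ∈ U, phi v c = phi v c' → c = c' := hinj
    have h2 : ∀ c ∈ U, ∀ c' ∈ U, -(phi v c) = -(phi v c') → c = c' :=
      fun c hc c' hc' h => hinj c hc c' hc' (neg_injective h)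
    rw [hW, Finset.sum_union hWdisj, Finset.sum_image h1, Finset.sum_image h2]
  -- membership facts used for both injections
  have hmem : ∀ c ∈ U, ∀ x ∈ img v (fun i => k i - c i), x ∈ S ∧ x + phi v c ∈ S := by
    intro c hc x hx
    obtain ⟨a, ha, rfl⟩ := Finset.mem_image.mp hx
    rw [mem_Box] at ha
    constructor
    · exact Finset.mem_image.mpr ⟨a, mem_Box.mpr fun i => by have := ha i; omega, rfl⟩
    · rw [← phi_add]
      refine Finset.mem_image.mpr ⟨a + c, mem_Box.mpr fun i => ?_, rfl⟩
      have := ha i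
      have := hUbound c hc i
      simp only [Pi.add_apply]
      omega
  have hcard1 : ∀ c ∈ U, (img v (fun i => k i - c i)).card ≤ (P (phi v c)).card := by
    intro c hc
    apply Finset.card_le_card_of_injOn (fun x => (x + phi v c, x))
    · intro x hx
      obtain ⟨hx1, hx2⟩ := hmem c hc x hx
      refine Finset.mem_filter.mpr ⟨Finset.mem_filter.mpr ⟨Finset.mem_product.mpr ⟨hx2, hx1⟩,
        ?_, ?_⟩, ?_⟩
      · intro h
        exact hne0 c hc (add_eq_left.mp h)
      · have h1 : N (phi v c) = 1 := hunit c hc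
        simpa [add_sub_cancel_left] using h1
      · simp [add_sub_cancel_left]
    · intro x _ y _ h
      exact congrArg Prod.snd h
  have hcard2 : ∀ c ∈ U, (img v (fun i => k i - c i)).card ≤ (P (-(phi v c))).card := by
    intro c hc
    apply Finset.card_le_card_of_injOn (fun x => (x, x + phi v c))
    · intro x hx
      obtain ⟨hx1, hx2⟩ := hmem c hc x hx
      refine Finset.mem_filter.mpr ⟨Finset.mem_filter.mpr ⟨Finset.mem_product.mpr ⟨hx1, hx2⟩,
        ?_, ?_⟩, ?_⟩
      · intro h
        exact hne0 c hc (add_eq_left.mp h.symm)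
      · rw [sub_add_cancel_left, Nneg]
        exact hunit c hc
      · simp [sub_add_cancel_left]
    · intro x _ y _ h
      exact congrArg Prod.fst h
  have hnat : ∑ c ∈ U, 2 * (img v (fun i => k i - c i)).card ≤ F.card := by
    calc ∑ c ∈ U, 2 * (img v (fun i => k i - c i)).card
        ≤ ∑ c ∈ U, ((P (phi v c)).card + (P (-(phi v c))).card) := by
          apply Finset.sum_le_sum
          intro c hc
          have := hcard1 c hc
          have := hcard2 c hc
          omega
      _ = ∑ c ∈ U, (P (phi v c)).card + ∑ c ∈ U, (P (-(phi v c))).card :=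
          Finset.sum_add_distrib
      _ = ∑ w ∈ W, (P w).card := hsplit.symm
      _ ≤ F.card := hsumW
  -- per-c real inequality
  have hkpos : (0 : ℝ) < ∏ i, (k i : ℝ) := by
    apply Finset.prod_pos
    intro i _
    have := hk i
    positivity
  have hreal : ∀ c ∈ U, (S.card : ℝ) * ∏ i, (1 - (c i : ℝ) / (k i : ℝ))
      ≤ ((img v (fun i => k i - c i)).card : ℝ) := by
    intro c hc
    have hprod : ∏ i, (1 - (c i : ℝ) / (k i : ℝ))
        = (∏ i, ((k i - c i : ℕ) : ℝ)) / ∏ i, (k i : ℝ) := by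
      rw [← Finset.prod_div_distrib]
      refine Finset.prod_congr rfl fun i _ => ?_
      have hki : (0 : ℝ) < (k i : ℝ) := by
        have := hk i; positivity
      rw [Nat.cast_sub (hUbound c hc i), sub_div, div_self (ne_of_gt hki)]
    rw [hprod, ← mul_div_assoc, div_le_iff₀ hkpos]
    have := key_all v k c
    calc (S.card : ℝ) * ∏ i, ((k i - c i : ℕ) : ℝ)
        = ((S.card * ∏ i, (k i - c i) : ℕ) : ℝ) := by push_cast; ring
      _ ≤ (((img v (fun i => k i - c i)).card * ∏ i, k i : ℕ) : ℝ) := by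
          exact_mod_cast this
      _ = ((img v (fun i => k i - c i)).card : ℝ) * ∏ i, (k i : ℝ) := by push_cast; ring
  calc 2 * ((S.card : ℝ) * ∑ c ∈ U, ∏ i, (1 - (c i : ℝ) / (k i : ℝ)))
      = ∑ c ∈ U, 2 * ((S.card : ℝ) * ∏ i, (1 - (c i : ℝ) / (k i : ℝ))) := by
        rw [Finset.mul_sum, Finset.mul_sum]
    _ ≤ ∑ c ∈ U, 2 * ((img v (fun i => k i - c i)).card : ℝ) := by
        apply Finset.sum_le_sum
        intro c hc
        have := hreal c hc
        linarith
    _ = ((∑ c ∈ U, 2 * (img v (fun i => k i - c i)).card : ℕ) : ℝ) := by push_cast; ring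
    _ ≤ (F.card : ℝ) := by exact_mod_cast hnat
end

section
/- Let ‖·‖ be a norm on ℝ^d, let m ≥ 1, let u_1, …, u_d ∈ ℝ^d be pairwise distinct points, and let w_1, …, w_{2d²m} ∈ ℝ^d be pairwise distinct points, all distinct from every u_j, such that ‖w_k − u_j‖ = 1 for all j ∈ {1,…,d} and k ∈ {1,…,2d²m}. Then there exist indices 1 ≤ i_1 < i_2 < ⋯ < i_m ≤ 2d²m such that the dm vectors {w_{i_ℓ} − u_j : ℓ ∈ {1,…,m}, j ∈ {1,…,d}} are pairwise distinct and form a non-overlapping set of dm unit vectors. -/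
open scoped Pointwise Classical

/-- Let ‖·‖ be a norm on ℝ^d, let m ≥ 1, let u_1, …, u_d ∈ ℝ^d be pairwise
distinct, and let w_1, …, w_{2d²m} ∈ ℝ^d be pairwise distinct, all distinct from every u_j,
with ‖w_k − u_j‖ = 1 for all j, k. Then there exist indices i_1 < ⋯ < i_m such that the dm
vectors {w_{i_ℓ} − u_j} are pairwise distinct and form a non-overlapping set of dm unit
vectors (i.e., no vector in the family equals the negative of another, or of itself). -/
theorem stmt14 (d m : ℕ) (hd : 1 ≤ d) (hm : 1 ≤ m)
    (N : EuclideanSpace ℝ (Fin d) → ℝ) (hN : IsNorm N)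
    (u : Fin d → EuclideanSpace ℝ (Fin d)) (hu : Function.Injective u)
    (w : Fin (2 * d ^ 2 * m) → EuclideanSpace ℝ (Fin d)) (hw : Function.Injective w)
    (huw : ∀ j k, w k ≠ u j)
    (hunit : ∀ j k, N (w k - u j) = 1) :
    ∃ ι : Fin m → Fin (2 * d ^ 2 * m), StrictMono ι ∧
      (Function.Injective fun p : Fin m × Fin d => w (ι p.1) - u p.2) ∧
      (∀ p q : Fin m × Fin d, w (ι p.1) - u p.2 ≠ -(w (ι q.1) - u q.2)) ∧
      (∀ p : Fin m × Fin d, N (w (ι p.1) - u p.2) = 1) := by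
  classical
  have key : ∀ t : ℕ, t ≤ m → ∃ S : Finset (Fin (2 * d ^ 2 * m)), S.card = t ∧
      (∀ a ∈ S, ∀ b ∈ S, a ≠ b → ∀ j j' : Fin d, w a - u j ≠ w b - u j') ∧
      (∀ a ∈ S, ∀ b ∈ S, ∀ j j' : Fin d, w a + w b ≠ u j + u j') := by
    intro t
    induction t with
    | zero => intro _; exact ⟨∅, by simp⟩
    | succ t ih =>
      intro ht
      obtain ⟨S, hcard, hP2, hP3⟩ := ih (le_trans (Nat.le_succ t) ht)
      set F : Finset (Fin (2 * d ^ 2 * m)) :=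
        (Finset.univ : Finset (Fin d × Fin d)).biUnion (fun jj =>
          (S.biUnion fun b =>
            (Finset.univ.filter fun k => w k = w b + u jj.1 - u jj.2) ∪
            (Finset.univ.filter fun k => w k = u jj.1 + u jj.2 - w b))
          ∪ (Finset.univ.filter fun k => w k + w k = u jj.1 + u jj.2)) with hF
      have hsub : S ⊆ F := by
        intro b hb
        apply Finset.mem_biUnion.2
        refine ⟨(⟨0, hd⟩, ⟨0, hd⟩), Finset.mem_univ _, ?_⟩
        apply Finset.mem_union_left
        apply Finset.mem_biUnion.2
        refine ⟨b, hb, ?_⟩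
        apply Finset.mem_union_left
        simp only [Finset.mem_filter, Finset.mem_univ, true_and]
        abel
      have hone : ∀ (c : EuclideanSpace ℝ (Fin d)),
          (Finset.univ.filter fun k : Fin (2 * d ^ 2 * m) => w k = c).card ≤ 1 := by
        intro c
        apply Finset.card_le_one.2
        intro a ha b hb
        simp only [Finset.mem_filter] at ha hb
        exact hw (ha.2.trans hb.2.symm)
      have hone2 : ∀ (c : EuclideanSpace ℝ (Fin d)),
          (Finset.univ.filter fun k : Fin (2 * d ^ 2 * m) => w k + w k = c).card ≤ 1 := by
        intro c
        apply Finset.card_le_one.2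
        intro a ha b hb
        simp only [Finset.mem_filter] at ha hb
        have h2 : (2 : ℝ) • w a = (2 : ℝ) • w b := by
          rw [two_smul, two_smul]
          exact ha.2.trans hb.2.symm
        exact hw (smul_right_injective _ two_ne_zero h2)
      have hcardF : F.card < 2 * d ^ 2 * m := by
        have h1 : F.card ≤ (d * d) * (2 * t + 1) := by
          calc F.card ≤ ∑ jj : Fin d × Fin d,
              ((S.biUnion fun b =>
                (Finset.univ.filter fun k => w k = w b + u jj.1 - u jj.2) ∪
                (Finset.univ.filter fun k => w k = u jj.1 + u jj.2 - w b))
              ∪ (Finset.univ.filter fun k => w k + w k = u jj.1 + u jj.2)).card :=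
                Finset.card_biUnion_le
          _ ≤ ∑ _jj : Fin d × Fin d, (2 * t + 1) := by
              apply Finset.sum_le_sum
              intro jj _
              calc _ ≤ (S.biUnion fun b =>
                    (Finset.univ.filter fun k => w k = w b + u jj.1 - u jj.2) ∪
                    (Finset.univ.filter fun k => w k = u jj.1 + u jj.2 - w b)).card +
                    (Finset.univ.filter fun k => w k + w k = u jj.1 + u jj.2).card :=
                  Finset.card_union_le _ _
                _ ≤ 2 * t + 1 := by
                  have hb1 : (S.biUnion fun b =>
                      (Finset.univ.filter fun k => w k = w b + u jj.1 - u jj.2) ∪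
                      (Finset.univ.filter fun k => w k = u jj.1 + u jj.2 - w b)).card ≤ 2 * t := by
                    calc _ ≤ ∑ b ∈ S, ((Finset.univ.filter fun k => w k = w b + u jj.1 - u jj.2) ∪
                          (Finset.univ.filter fun k => w k = u jj.1 + u jj.2 - w b)).card :=
                        Finset.card_biUnion_le
                      _ ≤ ∑ _b ∈ S, 2 := by
                          apply Finset.sum_le_sum
                          intro b _
                          calc _ ≤ _ + _ := Finset.card_union_le _ _
                            _ ≤ 1 + 1 := Nat.add_le_add (hone _) (hone _)
                      _ = 2 * t := by rw [Finset.sum_const, hcard, smul_eq_mul]; omega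
                  have he := hone2 (u jj.1 + u jj.2)
                  omega
          _ = (d * d) * (2 * t + 1) := by
              rw [Finset.sum_const]
              simp [Finset.card_univ, mul_comm]
        have hd2 : 1 ≤ d * d := Nat.one_le_iff_ne_zero.2 (by positivity)
        have htm : t + 1 ≤ m := ht
        have h2 : (d * d) * (2 * t + 1) + (d * d) ≤ (d * d) * (2 * m) := by
          have : (d * d) * (2 * t + 1) + (d * d) = (d * d) * (2 * (t + 1)) := by ring
          rw [this]
          exact Nat.mul_le_mul_left _ (by omega)
        have hn : 2 * d ^ 2 * m = (d * d) * (2 * m) := by ring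
        omega
      have hex : ∃ k, k ∉ F := by
        by_contra h
        push_neg at h
        have : (Finset.univ : Finset (Fin (2 * d ^ 2 * m))).card ≤ F.card :=
          Finset.card_le_card (fun x _ => h x)
        simp [Finset.card_univ] at this
        omega
      obtain ⟨k, hk⟩ := hex
      have hkS : k ∉ S := fun h => hk (hsub h)
      refine ⟨insert k S, ?_, ?_, ?_⟩
      · rw [Finset.card_insert_of_notMem hkS, hcard]
      · -- P2
        intro a ha b hb hab j j' heq
        rcases Finset.mem_insert.1 ha with ha1 | ha1 <;>
          rcases Finset.mem_insert.1 hb with hb1 | hb1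
        · exact hab (ha1.trans hb1.symm)
        · rw [ha1] at heq
          apply hk
          apply Finset.mem_biUnion.2
          refine ⟨(j, j'), Finset.mem_univ _, ?_⟩
          apply Finset.mem_union_left
          apply Finset.mem_biUnion.2
          refine ⟨b, hb1, ?_⟩
          apply Finset.mem_union_left
          simp only [Finset.mem_filter, Finset.mem_univ, true_and]
          rw [sub_eq_iff_eq_add] at heq
          rw [heq]; abel
        · rw [hb1] at heq
          apply hk
          apply Finset.mem_biUnion.2
          refine ⟨(j', j), Finset.mem_univ _, ?_⟩
          apply Finset.mem_union_left
          apply Finset.mem_biUnion.2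
          refine ⟨a, ha1, ?_⟩
          apply Finset.mem_union_left
          simp only [Finset.mem_filter, Finset.mem_univ, true_and]
          rw [eq_comm, sub_eq_iff_eq_add] at heq
          rw [heq]; abel
        · exact hP2 a ha1 b hb1 hab j j' heq
      · -- P3
        intro a ha b hb j j' heq
        rcases Finset.mem_insert.1 ha with ha1 | ha1 <;>
          rcases Finset.mem_insert.1 hb with hb1 | hb1
        · rw [ha1, hb1] at heq
          apply hk
          apply Finset.mem_biUnion.2
          refine ⟨(j, j'), Finset.mem_univ _, ?_⟩
          apply Finset.mem_union_right
          simp only [Finset.mem_filter, Finset.mem_univ, true_and]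
          exact heq
        · rw [ha1] at heq
          apply hk
          apply Finset.mem_biUnion.2
          refine ⟨(j, j'), Finset.mem_univ _, ?_⟩
          apply Finset.mem_union_left
          apply Finset.mem_biUnion.2
          refine ⟨b, hb1, ?_⟩
          apply Finset.mem_union_right
          simp only [Finset.mem_filter, Finset.mem_univ, true_and]
          rw [eq_sub_iff_add_eq]
          exact heq
        · rw [hb1] at heq
          apply hk
          apply Finset.mem_biUnion.2
          refine ⟨(j, j'), Finset.mem_univ _, ?_⟩
          apply Finset.mem_union_left
          apply Finset.mem_biUnion.2
          refine ⟨a, ha1, ?_⟩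
          apply Finset.mem_union_right
          simp only [Finset.mem_filter, Finset.mem_univ, true_and]
          rw [eq_sub_iff_add_eq, add_comm]
          exact heq
        · exact hP3 a ha1 b hb1 j j' heq
  obtain ⟨S, hScard, hP2, hP3⟩ := key m le_rfl
  set ι := S.orderEmbOfFin hScard with hι
  have hmem : ∀ i : Fin m, (ι i : Fin (2 * d ^ 2 * m)) ∈ S := fun i =>
    Finset.orderEmbOfFin_mem S hScard i
  refine ⟨fun i => ι i, (S.orderEmbOfFin hScard).strictMono, ?_, ?_, fun p => hunit _ _⟩
  · intro p q h
    simp only at h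
    by_cases h1 : p.1 = q.1
    · have h2 : u p.2 = u q.2 := by
        rw [h1] at h
        exact sub_right_inj.1 h
      exact Prod.ext h1 (hu h2)
    · have hne : (ι p.1 : Fin (2 * d ^ 2 * m)) ≠ ι q.1 := fun hc =>
        h1 ((S.orderEmbOfFin hScard).injective hc)
      exact absurd h (hP2 _ (hmem p.1) _ (hmem q.1) hne p.2 q.2)
  · intro p q heq
    simp only at heq
    have h2 : w (ι p.1) + w (ι q.1) = u p.2 + u q.2 := by
      rw [neg_sub] at heq
      rw [sub_eq_sub_iff_add_eq_add] at heq
      rw [heq]; abel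
    exact hP3 _ (hmem p.1) _ (hmem q.1) p.2 q.2 h2
end
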